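/- arXiv:2512.24640 — 8 statements merged into one kernel-verified Lean document; each statement's English description precedes it below -/
import Mathlib

section
/- Let M₀ ∈ ℝ, c > 0, L_g ≥ 0, M_g > 0 and S < M₀. Then there exists C_S > 0, depending only on M₀, S, c and L_g, with the following property. Let U and V be measurable spaces, u : [0,∞) → U and v : [0,∞) → V Lebesgue-measurable controls, and g : ℝ × U × V → ℝ a function with 0 ≤ g(y,a,b) ≤ M_g and |g(y,a,b) − g(y',a,b)| ≤ L_g|y − y'| for all y, y' ∈ ℝ, a ∈ U, b ∈ V, and with g(y,a,b) ≥ c whenever y ≤ M₀. Let S ≤ y₀ ≤ y₀' < M₀ and let y, y' : [0,∞) → ℝ be continuous functions such that for all t ≥ 0 the integrands below are Lebesgue measurable and y(t) = y₀ + ∫₀ᵗ g(y(s),u(s),v(s)) ds and y'(t) = y₀' + ∫₀ᵗ g(y'(s),u(s),v(s)) ds. Then the hitting times 𝒯 = inf{t ≥ 0 : y(t) ≥ M₀} and 𝒯' = inf{t ≥ 0 : y'(t) ≥ M₀} satisfy |𝒯 − 𝒯'| ≤ C_S |y₀ − y₀'|. -/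
/-!
Below the level `M₀` both trajectories climb with speed at least `c`, so each reaches `M₀`
before time `T = (M₀ - S) / c`, and a trajectory that is within `δ` of `M₀` reaches it within a
further time `δ / c`. By Gronwall's inequality the two trajectories stay within
`δ = e^{L_g T} |y₀ - y₀'|` of each other up to time `T`; hence each hitting time exceeds the
other by at most `δ / c`.
-/

open MeasureTheory Set Real

theorem le_mul_exp_of_le_add_mul_integral {h : ℝ → ℝ} {δ L : ℝ} (hh : ContinuousOn h (Ici 0))
    (hL : 0 ≤ L) (hle : ∀ t, 0 ≤ t → h t ≤ δ + L * ∫ s in (0 : ℝ)..t, h s) {t : ℝ}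
    (ht : 0 ≤ t) : h t ≤ δ * exp (L * t) := by
  -- `Φ' = L h ≤ L Φ`, so the differential form of Gronwall's inequality bounds `Φ ≥ h`.
  set Φ : ℝ → ℝ := fun r => δ + L * ∫ s in (0 : ℝ)..r, h s
  have hh' : ∀ r, 0 ≤ r → ContinuousOn h (uIcc 0 r) := fun r hr =>
    hh.mono (by simpa [uIcc_of_le hr] using Icc_subset_Ici_self)
  have hint : ∀ r, 0 ≤ r → IntervalIntegrable h volume 0 r := fun r hr =>
    (hh' r hr).intervalIntegrable
  have hderiv : ∀ r, 0 ≤ r → HasDerivWithinAt Φ (L * h r) (Ici r) r := by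
    intro r hr
    have hcont : ContinuousOn h (Ici r) := hh.mono (Ici_subset_Ici.mpr hr)
    exact ((intervalIntegral.integral_hasDerivWithinAt_right (t := Ioi r) (hint r hr)
      ((hcont.mono Ioi_subset_Ici_self).stronglyMeasurableAtFilter_nhdsWithin measurableSet_Ioi r)
      ((hcont r self_mem_Ici).mono Ioi_subset_Ici_self)).const_mul L).const_add δ
  have hΦ_cont : ContinuousOn Φ (Icc 0 t) := by
    have := intervalIntegral.continuousOn_primitive_interval
      ((hh' t ht).integrableOn_compact (μ := volume) isCompact_uIcc)
    rw [uIcc_of_le ht] at this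
    exact continuousOn_const.add (continuousOn_const.mul this)
  have hΦ := le_gronwallBound_of_liminf_deriv_right_le (ε := 0) hΦ_cont
    (fun r hr _ hlt => (hderiv r hr.1).liminf_right_slope_le hlt) (δ := δ) (by simp [Φ])
    (fun r hr => by simpa using mul_le_mul_of_nonneg_left (hle r hr.1) hL) t ⟨ht, le_rfl⟩
  rw [sub_zero, gronwallBound_ε0] at hΦ
  exact (hle t ht).trans hΦ

theorem abs_sub_le_mul_exp_of_eq_add_integral {y y' f f' : ℝ → ℝ} {y₀ y₀' L : ℝ}
    (hy_cont : ContinuousOn y (Ici 0)) (hy'_cont : ContinuousOn y' (Ici 0)) (hL : 0 ≤ L)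
    (hf : ∀ a b, IntervalIntegrable f volume a b) (hf' : ∀ a b, IntervalIntegrable f' volume a b)
    (hy : ∀ t, 0 ≤ t → y t = y₀ + ∫ s in (0 : ℝ)..t, f s)
    (hy' : ∀ t, 0 ≤ t → y' t = y₀' + ∫ s in (0 : ℝ)..t, f' s)
    (hlip : ∀ s, |f' s - f s| ≤ L * |y' s - y s|) {t : ℝ} (ht : 0 ≤ t) :
    |y' t - y t| ≤ |y₀' - y₀| * exp (L * t) := by
  have hdist_cont : ContinuousOn (fun s => |y' s - y s|) (Ici 0) := (hy'_cont.sub hy_cont).abs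
  refine le_mul_exp_of_le_add_mul_integral hdist_cont hL (fun r hr => ?_) ht
  have hdist_int : IntervalIntegrable (fun s => |y' s - y s|) volume 0 r :=
    (hdist_cont.mono (by simpa [uIcc_of_le hr] using Icc_subset_Ici_self)).intervalIntegrable
  calc |y' r - y r| = |(y₀' - y₀) + ∫ s in (0 : ℝ)..r, (f' s - f s)| := by
        rw [hy' r hr, hy r hr, intervalIntegral.integral_sub (hf' 0 r) (hf 0 r)]
        ring_nf
    _ ≤ |y₀' - y₀| + ∫ s in (0 : ℝ)..r, |f' s - f s| :=
        (abs_add_le _ _).trans (add_le_add le_rfl (intervalIntegral.abs_integral_le_integral_abs hr))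
    _ ≤ |y₀' - y₀| + ∫ s in (0 : ℝ)..r, L * |y' s - y s| :=
        add_le_add le_rfl (intervalIntegral.integral_mono_on hr ((hf' 0 r).sub (hf 0 r)).abs
          (hdist_int.const_mul L) fun s _ => hlip s)
    _ = |y₀' - y₀| + L * ∫ s in (0 : ℝ)..r, |y' s - y s| := by
        rw [intervalIntegral.integral_const_mul]

/-- This is `sInf ∅ = 0` when `z` never reaches `M`. -/
noncomputable def hittingTime (z : ℝ → ℝ) (M : ℝ) : ℝ := sInf {t : ℝ | 0 ≤ t ∧ M ≤ z t}

theorem hittingTime_mem {z : ℝ → ℝ} {M t : ℝ} (hz : ContinuousOn z (Ici 0)) (ht : 0 ≤ t)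
    (hzt : M ≤ z t) : 0 ≤ hittingTime z M ∧ M ≤ z (hittingTime z M) := by
  have hclosed : IsClosed {t : ℝ | 0 ≤ t ∧ M ≤ z t} :=
    hz.preimage_isClosed_of_isClosed isClosed_Ici isClosed_Ici
  exact hclosed.csInf_mem ⟨t, ht, hzt⟩ ⟨0, fun _ hs => hs.1⟩

structure IsClimbingTrajectory (z φ : ℝ → ℝ) (z₀ M c : ℝ) : Prop where
  eq_add_integral : ∀ t, 0 ≤ t → z t = z₀ + ∫ s in (0 : ℝ)..t, φ s
  intervalIntegrable : ∀ a b, IntervalIntegrable φ volume a b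
  nonneg : ∀ s, 0 ≤ φ s
  le_of_le : ∀ s, z s ≤ M → c ≤ φ s

namespace IsClimbingTrajectory

variable {z φ : ℝ → ℝ} {z₀ M c : ℝ}

theorem sub_eq_integral (hz : IsClimbingTrajectory z φ z₀ M c) {a b : ℝ} (ha : 0 ≤ a)
    (hb : 0 ≤ b) : z b - z a = ∫ s in a..b, φ s := by
  rw [hz.eq_add_integral b hb, hz.eq_add_integral a ha,
    ← intervalIntegral.integral_interval_sub_left (hz.intervalIntegrable 0 b)
      (hz.intervalIntegrable 0 a)]
  ring

theorem monotoneOn (hz : IsClimbingTrajectory z φ z₀ M c) : MonotoneOn z (Ici 0) := by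
  intro a ha b hb hab
  rw [← sub_nonneg, hz.sub_eq_integral ha hb]
  exact intervalIntegral.integral_nonneg hab fun s _ => hz.nonneg s

theorem le_apply_add_div (hz : IsClimbingTrajectory z φ z₀ M c) (hc : 0 < c) {s₀ δ : ℝ}
    (hs₀ : 0 ≤ s₀) (hδ : 0 ≤ δ) (hzs₀ : M - δ ≤ z s₀) : M ≤ z (s₀ + δ / c) := by
  set t₁ := s₀ + δ / c
  have hs₀t₁ : s₀ ≤ t₁ := le_add_of_nonneg_right (div_nonneg hδ hc.le)
  by_contra! hlt
  have hφ : ∀ s ∈ Icc s₀ t₁, c ≤ φ s := fun s hs =>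
    hz.le_of_le s ((hz.monotoneOn (hs₀.trans hs.1) (hs₀.trans hs₀t₁) hs.2).trans hlt.le)
  have hrise : c * (t₁ - s₀) ≤ z t₁ - z s₀ := by
    rw [hz.sub_eq_integral hs₀ (hs₀.trans hs₀t₁)]
    simpa [mul_comm] using intervalIntegral.integral_mono_on hs₀t₁ intervalIntegrable_const
      (hz.intervalIntegrable s₀ t₁) hφ
  have hδ_eq : c * (t₁ - s₀) = δ := by
    simp only [t₁]
    field_simp
    ring
  linarith

theorem hittingTime_le_add_div (hz : IsClimbingTrajectory z φ z₀ M c) (hc : 0 < c) {s₀ δ : ℝ}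
    (hs₀ : 0 ≤ s₀) (hδ : 0 ≤ δ) (hzs₀ : M - δ ≤ z s₀) : hittingTime z M ≤ s₀ + δ / c :=
  csInf_le ⟨0, fun _ ht => ht.1⟩ ⟨by positivity, hz.le_apply_add_div hc hs₀ hδ hzs₀⟩

theorem apply_zero (hz : IsClimbingTrajectory z φ z₀ M c) : z 0 = z₀ := by
  simpa using hz.eq_add_integral 0 le_rfl

theorem hittingTime_le_div (hz : IsClimbingTrajectory z φ z₀ M c) (hc : 0 < c) (hz₀ : z₀ ≤ M) :
    hittingTime z M ≤ (M - z₀) / c := by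
  simpa using hz.hittingTime_le_add_div hc le_rfl (sub_nonneg.mpr hz₀) (by simp [hz.apply_zero])

theorem hittingTime_mem (hz : IsClimbingTrajectory z φ z₀ M c) (hc : 0 < c)
    (hz_cont : ContinuousOn z (Ici 0)) (hz₀ : z₀ ≤ M) :
    0 ≤ hittingTime z M ∧ M ≤ z (hittingTime z M) := by
  have hreach := hz.le_apply_add_div hc le_rfl (sub_nonneg.mpr hz₀) (by simp [hz.apply_zero])
  exact _root_.hittingTime_mem hz_cont (by positivity) hreach

theorem hittingTime_le_hittingTime_add_div (hz : IsClimbingTrajectory z φ z₀ M c) (hc : 0 < c)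
    {w : ℝ → ℝ} {δ : ℝ} (hw : 0 ≤ hittingTime w M ∧ M ≤ w (hittingTime w M))
    (hclose : |z (hittingTime w M) - w (hittingTime w M)| ≤ δ) :
    hittingTime z M ≤ hittingTime w M + δ / c :=
  hz.hittingTime_le_add_div hc hw.1 ((abs_nonneg _).trans hclose)
    (by linarith [(abs_le.mp hclose).1, hw.2])

theorem abs_hittingTime_sub_le {w ψ : ℝ → ℝ} {w₀ T δ : ℝ} (hz : IsClimbingTrajectory z φ z₀ M c)
    (hw : IsClimbingTrajectory w ψ w₀ M c) (hc : 0 < c) (hz_cont : ContinuousOn z (Ici 0))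
    (hw_cont : ContinuousOn w (Ici 0)) (hz₀ : z₀ ≤ M) (hw₀ : w₀ ≤ M) (hzT : (M - z₀) / c ≤ T)
    (hwT : (M - w₀) / c ≤ T) (hclose : ∀ t, 0 ≤ t → t ≤ T → |z t - w t| ≤ δ) :
    |hittingTime z M - hittingTime w M| ≤ δ / c := by
  have hτz := hz.hittingTime_mem hc hz_cont hz₀
  have hτw := hw.hittingTime_mem hc hw_cont hw₀
  have hτzT := (hz.hittingTime_le_div hc hz₀).trans hzT
  have hτwT := (hw.hittingTime_le_div hc hw₀).trans hwT
  rw [abs_sub_le_iff, sub_le_iff_le_add', sub_le_iff_le_add']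
  exact ⟨hz.hittingTime_le_hittingTime_add_div hc hτw (hclose _ hτw.1 hτwT),
    hw.hittingTime_le_hittingTime_add_div hc hτz (abs_sub_comm (z _) _ ▸ hclose _ hτz.1 hτzT)⟩

theorem of_measurable {Mg : ℝ} (hz : ∀ t, 0 ≤ t → z t = z₀ + ∫ s in (0 : ℝ)..t, φ s)
    (hφ : Measurable φ) (hφ0 : ∀ s, 0 ≤ φ s) (hφMg : ∀ s, φ s ≤ Mg)
    (hφc : ∀ s, z s ≤ M → c ≤ φ s) : IsClimbingTrajectory z φ z₀ M c :=
  ⟨hz, fun _ _ => intervalIntegrable_const.mono_fun' hφ.aestronglyMeasurable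
    (ae_of_all _ fun s => (Real.norm_of_nonneg (hφ0 s)).trans_le (hφMg s)), hφ0, hφc⟩

end IsClimbingTrajectory

theorem hitting_time_locally_lipschitz_general
    (M₀ c Lg Mg S : ℝ) (hc : 0 < c) (hLg : 0 ≤ Lg) :
    ∃ CS : ℝ, 0 < CS ∧
      ∀ (U V : Type) [MeasurableSpace U] [MeasurableSpace V]
        (u : ℝ → U) (v : ℝ → V), Measurable u → Measurable v →
        ∀ g : ℝ → U → V → ℝ,
          (∀ y a b, 0 ≤ g y a b) →
          (∀ y a b, g y a b ≤ Mg) →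
          (∀ y y' a b, |g y a b - g y' a b| ≤ Lg * |y - y'|) →
          (∀ y a b, y ≤ M₀ → c ≤ g y a b) →
          ∀ y₀ y₀' : ℝ, S ≤ y₀ → y₀ ≤ y₀' → y₀' < M₀ →
            ∀ y y' : ℝ → ℝ, ContinuousOn y (Ici 0) → ContinuousOn y' (Ici 0) →
              Measurable (fun s => g (y s) (u s) (v s)) →
              Measurable (fun s => g (y' s) (u s) (v s)) →
              (∀ t : ℝ, 0 ≤ t → y t = y₀ + ∫ s in (0 : ℝ)..t, g (y s) (u s) (v s)) →
              (∀ t : ℝ, 0 ≤ t → y' t = y₀' + ∫ s in (0 : ℝ)..t, g (y' s) (u s) (v s)) →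
              |sInf {t : ℝ | 0 ≤ t ∧ M₀ ≤ y t} - sInf {t : ℝ | 0 ≤ t ∧ M₀ ≤ y' t}| ≤
                CS * |y₀ - y₀'| := by
  set T := (M₀ - S) / c
  refine ⟨exp (Lg * T) / c, by positivity, ?_⟩
  intro U V _ _ u v _ _ g hg0 hgM hgLip hgc y₀ y₀' hSy₀ hy₀y₀' hy₀'M y y' hy_cont hy'_cont
    hf hf' hy hy'
  have hz := IsClimbingTrajectory.of_measurable hy hf (fun _ => hg0 _ _ _) (fun _ => hgM _ _ _)
    (fun _ hs => hgc _ _ _ hs)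
  have hz' := IsClimbingTrajectory.of_measurable hy' hf' (fun _ => hg0 _ _ _)
    (fun _ => hgM _ _ _) (fun _ hs => hgc _ _ _ hs)
  have hclose : ∀ t, 0 ≤ t → t ≤ T → |y t - y' t| ≤ |y₀ - y₀'| * exp (Lg * T) :=
    fun t ht htT => (abs_sub_le_mul_exp_of_eq_add_integral hy'_cont hy_cont hLg
      hz'.intervalIntegrable hz.intervalIntegrable hy' hy (fun s => hgLip _ _ _ _) ht).trans
      (mul_le_mul_of_nonneg_left (exp_le_exp.mpr (mul_le_mul_of_nonneg_left htT hLg))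
        (abs_nonneg _))
  calc |hittingTime y M₀ - hittingTime y' M₀| ≤ |y₀ - y₀'| * exp (Lg * T) / c :=
        hz.abs_hittingTime_sub_le hz' hc hy_cont hy'_cont (by linarith) hy₀'M.le
          (div_le_div_of_nonneg_right (by linarith) hc.le)
          (div_le_div_of_nonneg_right (by linarith) hc.le) hclose
    _ = exp (Lg * T) / c * |y₀ - y₀'| := by ring

/-- Local Lipschitz continuity of the hitting time of the target set `[M₀, ∞)`
with respect to the initial position, uniformly in the controls. -/
theorem hitting_time_locally_lipschitz
    (M₀ c Lg Mg S : ℝ) (hc : 0 < c) (hLg : 0 ≤ Lg) (hMg : 0 < Mg) (hS : S < M₀) :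
    ∃ CS : ℝ, 0 < CS ∧
      ∀ (U V : Type) [MeasurableSpace U] [MeasurableSpace V]
        (u : ℝ → U) (v : ℝ → V), Measurable u → Measurable v →
        ∀ g : ℝ → U → V → ℝ,
          (∀ y a b, 0 ≤ g y a b) →
          (∀ y a b, g y a b ≤ Mg) →
          (∀ y y' a b, |g y a b - g y' a b| ≤ Lg * |y - y'|) →
          (∀ y a b, y ≤ M₀ → c ≤ g y a b) →
          ∀ y₀ y₀' : ℝ, S ≤ y₀ → y₀ ≤ y₀' → y₀' < M₀ →
            ∀ y y' : ℝ → ℝ, ContinuousOn y (Ici 0) → ContinuousOn y' (Ici 0) →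
              Measurable (fun s => g (y s) (u s) (v s)) →
              Measurable (fun s => g (y' s) (u s) (v s)) →
              (∀ t : ℝ, 0 ≤ t → y t = y₀ + ∫ s in (0 : ℝ)..t, g (y s) (u s) (v s)) →
              (∀ t : ℝ, 0 ≤ t → y' t = y₀' + ∫ s in (0 : ℝ)..t, g (y' s) (u s) (v s)) →
              |sInf {t : ℝ | 0 ≤ t ∧ M₀ ≤ y t} - sInf {t : ℝ | 0 ≤ t ∧ M₀ ≤ y' t}| ≤
                CS * |y₀ - y₀'| :=
  hitting_time_locally_lipschitz_general M₀ c Lg Mg S hc hLg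
end

section
/- Let Z be a nonempty compact subset of ℝ^{n+1}, let U and V be nonempty compact metric spaces, and let F : ℝ^{n+1} × U × V → ℝ^{n+1} and ℓ : ℝ^{n+1} × U × V → ℝ be bounded continuous functions. Then the following three conditions are equivalent. (IC3): for every Borel probability measure μ on Z and every continuous p : Z → ℝ^{n+1}, inf_{u∈U} sup_{v∈V} ∫_Z [F(z,u,v)·p(z) + ℓ(z,u,v)] dμ(z) = sup_{v∈V} inf_{u∈U} ∫_Z [F(z,u,v)·p(z) + ℓ(z,u,v)] dμ(z). (IC4): for every I ≥ 1, all q₁,…,q_I ≥ 0 with Σᵢ qᵢ = 1, all z₁,…,z_I ∈ Z and all p₁,…,p_I ∈ ℝ^{n+1}, inf_{u∈U} sup_{v∈V} Σᵢ qᵢ [F(zᵢ,u,v)·pᵢ + ℓ(zᵢ,u,v)] = sup_{v∈V} inf_{u∈U} Σᵢ qᵢ [F(zᵢ,u,v)·pᵢ + ℓ(zᵢ,u,v)]. (IC5): for every Borel probability measure μ on Z, every continuous Φ : Z → Z and every continuous p : Z → ℝ^{n+1}, inf_{u∈U} sup_{v∈V} ∫_Z [F(Φ(z),u,v)·p(z)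 + ℓ(Φ(z),u,v)] dμ(z) = sup_{v∈V} inf_{u∈U} ∫_Z [F(Φ(z),u,v)·p(z) + ℓ(Φ(z),u,v)] dμ(z). -/
open MeasureTheory Set

noncomputable section

abbrev Euc (n : ℕ) : Type := EuclideanSpace ℝ (Fin (n + 1))

/-- The integrand `F(w,u,v)·p + ℓ(w,u,v)` appearing in the Isaacs conditions. -/
def icIntegrand {n : ℕ} {U V : Type}
    (F : Euc n → U → V → Euc n) (l : Euc n → U → V → ℝ)
    (w p : Euc n) (u : U) (v : V) : ℝ :=
  (inner ℝ (F w u v) p : ℝ) + l w u v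

/-!
(IC5) with `Φ = id` is (IC3), and (IC3) contains (IC4): the finite game with data `qᵢ, zᵢ, pᵢ` is
the integral game for the measure `∑ qᵢ δ_{zᵢ}` and a continuous `p` with the right values at
the `zᵢ` (Tietze). For (IC4) ⇒ (IC5), cut `Zs` into finitely many measurable pieces of small
diameter: by uniform continuity of the integrand on the compact `Zs × U × V`, the integral game
is uniformly close to the finite game with the masses of the pieces as weights. Lower and upper
values are 1-Lipschitz for the uniform distance, so their equality passes to the limit.
-/

section GameValue

variable {U V : Type*}

def HasGameValue (g : U → V → ℝ) : Prop :=
  ⨅ u, ⨆ v, g u v = ⨆ v, ⨅ u, g u v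

variable [Nonempty U] [Nonempty V] {g h : U → V → ℝ} {C ε : ℝ}

lemma iSup_iInf_le_iInf_iSup_of_abs_le (hg : ∀ u v, |g u v| ≤ C) :
    ⨆ v, ⨅ u, g u v ≤ ⨅ u, ⨆ v, g u v :=
  ciSup_le fun v => le_ciInf fun u =>
    (ciInf_le ⟨-C, forall_mem_range.2 fun u => (abs_le.1 (hg u v)).1⟩ u).trans
      (le_ciSup ⟨C, forall_mem_range.2 fun v => (abs_le.1 (hg u v)).2⟩ v)

lemma iInf_iSup_le_iInf_iSup_add (hg : ∀ u v, |g u v| ≤ C) (hh : ∀ u v, |h u v| ≤ C)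
    (hgh : ∀ u v, g u v ≤ h u v + ε) :
    ⨅ u, ⨆ v, g u v ≤ (⨅ u, ⨆ v, h u v) + ε := by
  have hg_bdd : BddBelow (range fun u => ⨆ v, g u v) := by
    refine ⟨-C, forall_mem_range.2 fun u => ?_⟩
    obtain ⟨v⟩ := ‹Nonempty V›
    exact (abs_le.1 (hg u v)).1.trans
      (le_ciSup ⟨C, forall_mem_range.2 fun v => (abs_le.1 (hg u v)).2⟩ v)
  rw [← sub_le_iff_le_add]
  refine le_ciInf fun u => sub_le_iff_le_add.2 ((ciInf_le hg_bdd u).trans (ciSup_le fun v => ?_))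
  exact (hgh u v).trans (add_le_add_left
    (le_ciSup ⟨C, forall_mem_range.2 fun v => (abs_le.1 (hh u v)).2⟩ v) ε)

lemma iSup_iInf_le_iSup_iInf_add (hg : ∀ u v, |g u v| ≤ C) (hh : ∀ u v, |h u v| ≤ C)
    (hgh : ∀ u v, g u v ≤ h u v + ε) :
    ⨆ v, ⨅ u, g u v ≤ (⨆ v, ⨅ u, h u v) + ε := by
  have hh_bdd : BddAbove (range fun v => ⨅ u, h u v) := by
    refine ⟨C, forall_mem_range.2 fun v => ?_⟩
    obtain ⟨u⟩ := ‹Nonempty U›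
    exact (ciInf_le ⟨-C, forall_mem_range.2 fun u => (abs_le.1 (hh u v)).1⟩ u).trans
      (abs_le.1 (hh u v)).2
  refine ciSup_le fun v => ?_
  have hgh_inf : (⨅ u, g u v) - ε ≤ ⨅ u, h u v :=
    le_ciInf fun u => sub_le_iff_le_add.2 <|
      (ciInf_le ⟨-C, forall_mem_range.2 fun u => (abs_le.1 (hg u v)).1⟩ u).trans (hgh u v)
  linarith [le_ciSup hh_bdd v]

lemma HasGameValue.of_forall_approx (hg : ∀ u v, |g u v| ≤ C)
    (happrox : ∀ ε > 0, ∃ h : U → V → ℝ, (∀ u v, |g u v - h u v| ≤ ε) ∧ HasGameValue h) :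
    HasGameValue g := by
  refine le_antisymm (le_of_forall_pos_le_add fun ε hε => ?_)
    (iSup_iInf_le_iInf_iSup_of_abs_le hg)
  obtain ⟨h, hgh, hh⟩ := happrox (ε / 2) (half_pos hε)
  have hg' : ∀ u v, |g u v| ≤ C + ε / 2 := fun u v => by linarith [hg u v]
  have hh' : ∀ u v, |h u v| ≤ C + ε / 2 := fun u v => by
    linarith [hg u v, hgh u v, abs_sub_abs_le_abs_sub (h u v) (g u v), abs_sub_comm (h u v) (g u v)]
  calc ⨅ u, ⨆ v, g u v ≤ (⨅ u, ⨆ v, h u v) + ε / 2 :=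
        iInf_iSup_le_iInf_iSup_add hg' hh' fun u v => by linarith [(abs_le.1 (hgh u v)).2]
    _ = (⨆ v, ⨅ u, h u v) + ε / 2 := by rw [hh]
    _ ≤ (⨆ v, ⨅ u, g u v) + ε / 2 + ε / 2 := by
        gcongr
        exact iSup_iInf_le_iSup_iInf_add hh' hg' fun u v => by linarith [(abs_le.1 (hgh u v)).1]
    _ = (⨆ v, ⨅ u, g u v) + ε := by ring

end GameValue

section FiberAverage

open Finset

variable {ι X E : Type*} [Fintype ι] [DecidableEq X]

/-- When the weights on the fiber vanish, `0⁻¹ = 0` makes this `0`; it then only ever carries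
weight `0`. -/
def fiberAverage [AddCommGroup E] [Module ℝ E] (q : ι → ℝ) (x : ι → X) (p : ι → E) (w : X) : E :=
  (∑ i with x i = w, q i)⁻¹ • ∑ i with x i = w, q i • p i

variable {q : ι → ℝ}

lemma sum_fiber_smul_fiberAverage [AddCommGroup E] [Module ℝ E] (hq : ∀ i, 0 ≤ q i) (x : ι → X)
    (p : ι → E) (w : X) :
    ∑ i with x i = w, q i • fiberAverage q x p (x i) = ∑ i with x i = w, q i • p i := by
  rw [sum_congr rfl fun i hi => by rw [(mem_filter.1 hi).2], ← sum_smul, fiberAverage, smul_smul]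
  rcases eq_or_ne (∑ i with x i = w, q i) 0 with h0 | h0
  · have hq0 : ∀ i ∈ univ.filter (x · = w), q i = 0 :=
      (sum_eq_zero_iff_of_nonneg fun i _ => hq i).1 h0
    rw [h0, zero_mul, zero_smul, sum_eq_zero fun i hi => by rw [hq0 i hi, zero_smul]]
  · rw [mul_inv_cancel₀ h0, one_smul]

lemma sum_mul_inner_fiberAverage [NormedAddCommGroup E] [InnerProductSpace ℝ E]
    (hq : ∀ i, 0 ≤ q i) (x : ι → X) (p : ι → E) (a : X → E) :
    ∑ i, q i * inner ℝ (a (x i)) (fiberAverage q x p (x i)) =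
      ∑ i, q i * inner ℝ (a (x i)) (p i) := by
  have hfiber : ∀ y : ι → E, ∑ i, q i * inner ℝ (a (x i)) (y i) =
      ∑ w ∈ univ.image x, inner ℝ (a w) (∑ i with x i = w, q i • y i) := by
    intro y
    rw [← sum_fiberwise_of_maps_to fun i _ => mem_image_of_mem x (mem_univ i)]
    refine sum_congr rfl fun w _ => ?_
    rw [inner_sum]
    refine sum_congr rfl fun i hi => ?_
    rw [real_inner_smul_right, (mem_filter.1 hi).2]
  rw [hfiber, hfiber]
  simp_rw [sum_fiber_smul_fiberAverage hq]

end FiberAverage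

section DiracSum

open Finset

variable {ι X : Type*} [Fintype ι] [MeasurableSpace X] {q : ι → ℝ}

lemma isProbabilityMeasure_sum_smul_dirac (hq : ∀ i, 0 ≤ q i) (hq1 : ∑ i, q i = 1) (x : ι → X) :
    IsProbabilityMeasure (∑ i, ENNReal.ofReal (q i) • Measure.dirac (x i)) := by
  constructor
  simp only [Measure.coe_finsetSum, Finset.sum_apply, Measure.smul_apply, measure_univ,
    smul_eq_mul, mul_one]
  rw [← ENNReal.ofReal_sum_of_nonneg fun i _ => hq i, hq1, ENNReal.ofReal_one]

lemma integral_sum_smul_dirac [MeasurableSingletonClass X] (hq : ∀ i, 0 ≤ q i) (x : ι → X)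
    (f : X → ℝ) :
    ∫ w, f w ∂(∑ i, ENNReal.ofReal (q i) • Measure.dirac (x i)) = ∑ i, q i * f (x i) := by
  rw [integral_finsetSum_measure fun i _ =>
    (integrable_dirac enorm_lt_top).smul_measure ENNReal.ofReal_ne_top]
  simp [integral_smul_measure, integral_dirac, ENNReal.toReal_ofReal (hq _)]

end DiracSum

universe u

lemma Set.Finite.exists_continuousMap_eqOn {X : Type u} {E : Type*} [TopologicalSpace X]
    [NormalSpace X] [T1Space X] [TopologicalSpace E] [TietzeExtension.{u} E] {s : Set X}
    (hs : s.Finite) (f : X → E) : ∃ g : C(X, E), EqOn g f s := by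
  obtain ⟨g, hg⟩ := ContinuousMap.exists_restrict_eq hs.isClosed
    ⟨s.domRestrict f, (hs.continuousOn f).domRestrict⟩
  exact ⟨g, fun x hx => congrArg (· ⟨x, hx⟩) hg⟩

section Discretization

open Function Metric Finset

variable {X : Type*} [MeasurableSpace X]

lemma exists_measurable_partition_subset_ball [PseudoMetricSpace X] [CompactSpace X]
    [OpensMeasurableSpace X] {δ : ℝ} (hδ : 0 < δ) :
    ∃ (k : ℕ) (c : Fin k → X) (A : Fin k → Set X), (∀ j, MeasurableSet (A j)) ∧
      Pairwise (Disjoint on A) ∧ ⋃ j, A j = univ ∧ ∀ j, A j ⊆ ball (c j) δ := by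
  obtain ⟨t, ht⟩ := isCompact_univ.elim_finite_subcover (fun x : X => ball x δ)
    (fun _ => isOpen_ball) fun x _ => mem_iUnion.2 ⟨x, mem_ball_self hδ⟩
  let c : Fin #t → X := fun j => t.equivFin.symm j
  refine ⟨#t, c, disjointed fun j => ball (c j) δ,
    fun j => disjointedRec (fun _ _ hs => hs.diff measurableSet_ball) measurableSet_ball,
    disjoint_disjointed _, ?_, disjointed_subset _⟩
  refine iUnion_disjointed.trans (eq_univ_of_forall fun x => ?_)
  obtain ⟨y, hy, hxy⟩ := mem_iUnion₂.1 (ht (mem_univ x))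
  exact mem_iUnion.2 ⟨t.equivFin ⟨y, hy⟩, by simpa [c] using hxy⟩

lemma abs_integral_sub_sum_le {ι : Type*} [Fintype ι] {μ : Measure X} [IsProbabilityMeasure μ]
    {A : ι → Set X} (hAm : ∀ j, MeasurableSet (A j)) (hAd : Pairwise (Disjoint on A))
    (hAu : ⋃ j, A j = univ) {c : ι → X} {f : X → ℝ} (hf : Integrable f μ) {ε : ℝ}
    (hfA : ∀ j, ∀ x ∈ A j, |f x - f (c j)| ≤ ε) :
    |∫ x, f x ∂μ - ∑ j, μ.real (A j) * f (c j)| ≤ ε := by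
  have hsplit : ∫ x, f x ∂μ = ∑ j, ∫ x in A j, f x ∂μ := by
    rw [← setIntegral_univ, ← hAu, integral_iUnion_fintype hAm hAd fun _ => hf.integrableOn]
  have hpiece : ∀ j, |∫ x in A j, f x ∂μ - μ.real (A j) * f (c j)| ≤ ε * μ.real (A j) := by
    intro j
    rw [← smul_eq_mul, ← setIntegral_const,
      ← integral_sub hf.integrableOn (integrableOn_const (measure_ne_top μ _))]
    exact norm_setIntegral_le_of_norm_le_const (f := fun x => f x - f (c j))
      (measure_lt_top μ _) (hfA j)
  calc |∫ x, f x ∂μ - ∑ j, μ.real (A j) * f (c j)|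
      = |∑ j, (∫ x in A j, f x ∂μ - μ.real (A j) * f (c j))| := by
        rw [hsplit, sum_sub_distrib]
    _ ≤ ∑ j, ε * μ.real (A j) := (abs_sum_le_sum_abs _ _).trans (sum_le_sum fun j _ => hpiece j)
    _ = ε := by rw [← mul_sum, ← measureReal_iUnion_fintype hAd hAm, hAu, probReal_univ, mul_one]

lemma exists_sum_dirac_approx_integral [PseudoMetricSpace X] [CompactSpace X]
    [OpensMeasurableSpace X] (μ : Measure X) [IsProbabilityMeasure μ] {δ : ℝ} (hδ : 0 < δ) :
    ∃ (k : ℕ) (q : Fin k → ℝ) (c : Fin k → X), (∀ j, 0 ≤ q j) ∧ ∑ j, q j = 1 ∧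
      ∀ ⦃f : X → ℝ⦄, Integrable f μ → ∀ ⦃ε : ℝ⦄, (∀ x y, dist x y < δ → |f x - f y| ≤ ε) →
        |∫ x, f x ∂μ - ∑ j, q j * f (c j)| ≤ ε := by
  obtain ⟨k, c, A, hAm, hAd, hAu, hAc⟩ := exists_measurable_partition_subset_ball (X := X) hδ
  refine ⟨k, fun j => μ.real (A j), c, fun _ => measureReal_nonneg, ?_,
    fun f hf ε hfδ => abs_integral_sub_sum_le hAm hAd hAu hf fun j x hx => hfδ _ _ (hAc j hx)⟩
  rw [← measureReal_iUnion_fintype hAd hAm, hAu, probReal_univ]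

end Discretization

section IntegralGame

variable {X U V : Type*} [PseudoMetricSpace X] [CompactSpace X]
  [PseudoMetricSpace U] [CompactSpace U] [PseudoMetricSpace V] [CompactSpace V]
  {h : X → U → V → ℝ}

lemma exists_pos_forall_dist_lt_abs_sub_le
    (hc : Continuous fun y : X × U × V => h y.1 y.2.1 y.2.2) {ε : ℝ} (hε : 0 < ε) :
    ∃ δ > 0, ∀ x y, dist x y < δ → ∀ u v, |h x u v - h y u v| ≤ ε := by
  obtain ⟨δ, hδ, hδε⟩ := Metric.uniformContinuous_iff.1
    (CompactSpace.uniformContinuous_of_continuous hc) ε hε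
  refine ⟨δ, hδ, fun x y hxy u v => (hδε (a := (x, u, v)) (b := (y, u, v)) ?_).le⟩
  simpa [Prod.dist_eq] using hxy

variable [Nonempty U] [Nonempty V] [MeasurableSpace X] [OpensMeasurableSpace X]

theorem HasGameValue.integral_of_sum (μ : Measure X) [IsProbabilityMeasure μ]
    (hc : Continuous fun y : X × U × V => h y.1 y.2.1 y.2.2)
    (hsum : ∀ (k : ℕ) (q : Fin k → ℝ) (c : Fin k → X), (∀ j, 0 ≤ q j) → ∑ j, q j = 1 →
      HasGameValue fun u v => ∑ j, q j * h (c j) u v) :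
    HasGameValue fun u v => ∫ x, h x u v ∂μ := by
  obtain ⟨C, hC⟩ := isCompact_univ.exists_bound_of_continuousOn hc.continuousOn
  have hcont : ∀ u v, Continuous fun x => h x u v := fun u v => by fun_prop
  have hint : ∀ u v, Integrable (fun x => h x u v) μ := fun u v =>
    (hcont u v).integrable_of_hasCompactSupport (.of_compactSpace _)
  refine .of_forall_approx (C := C) (fun u v => ?_) fun ε hε => ?_
  · simpa using norm_integral_le_of_norm_le_const (μ := μ)
      (.of_forall fun x => hC (x, u, v) (mem_univ _))
  obtain ⟨δ, hδ, hδε⟩ := exists_pos_forall_dist_lt_abs_sub_le hc hε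
  obtain ⟨k, q, c, hq, hq1, happrox⟩ := exists_sum_dirac_approx_integral μ hδ
  exact ⟨_, fun u v => happrox (hint u v) fun x y hxy => hδε x y hxy u v, hsum k q c hq hq1⟩

end IntegralGame

section Isaacs

variable {n : ℕ} {Zs : Set (Euc n)} {U V : Type}
  {F : Euc n → U → V → Euc n} {l : Euc n → U → V → ℝ}

def IsaacsIC3 (Zs : Set (Euc n)) (F : Euc n → U → V → Euc n) (l : Euc n → U → V → ℝ) : Prop :=
  ∀ μ : Measure ↥Zs, IsProbabilityMeasure μ → ∀ p : C(↥Zs, Euc n),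
    HasGameValue fun u v => ∫ z, icIntegrand F l (z : Euc n) (p z) u v ∂μ

def IsaacsIC4 (Zs : Set (Euc n)) (F : Euc n → U → V → Euc n) (l : Euc n → U → V → ℝ) : Prop :=
  ∀ I : ℕ, 1 ≤ I → ∀ q : Fin I → ℝ, (∀ i, 0 ≤ q i) → (∑ i, q i) = 1 →
    ∀ z : Fin I → Euc n, (∀ i, z i ∈ Zs) → ∀ p : Fin I → Euc n,
      HasGameValue fun u v => ∑ i, q i * icIntegrand F l (z i) (p i) u v

def IsaacsIC5 (Zs : Set (Euc n)) (F : Euc n → U → V → Euc n) (l : Euc n → U → V → ℝ) : Prop :=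
  ∀ μ : Measure ↥Zs, IsProbabilityMeasure μ → ∀ Φ : C(↥Zs, ↥Zs), ∀ p : C(↥Zs, Euc n),
    HasGameValue fun u v => ∫ z, icIntegrand F l (Φ z : Euc n) (p z) u v ∂μ

lemma Continuous.icIntegrand {Y : Type*} [TopologicalSpace Y] [TopologicalSpace U]
    [TopologicalSpace V] (hFc : Continuous fun q : Euc n × U × V => F q.1 q.2.1 q.2.2)
    (hlc : Continuous fun q : Euc n × U × V => l q.1 q.2.1 q.2.2) {w p : Y → Euc n} {u : Y → U}
    {v : Y → V} (hw : Continuous w) (hp : Continuous p) (hu : Continuous u) (hv : Continuous v) :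
    Continuous fun y => icIntegrand F l (w y) (p y) (u y) (v y) :=
  ((hFc.comp (hw.prodMk (hu.prodMk hv))).inner hp).add (hlc.comp (hw.prodMk (hu.prodMk hv)))

/-- The `pᵢ` over a repeated point `zᵢ` are merged into their weighted average, which the game
cannot tell apart from them since it is linear in `p`. -/
lemma IsaacsIC3.isaacsIC4 (h3 : IsaacsIC3 Zs F l) : IsaacsIC4 Zs F l := by
  classical
  intro I _ q hq hq1 z hz p
  let x : Fin I → Zs := fun i => ⟨z i, hz i⟩
  obtain ⟨P, hP⟩ := (finite_range x).exists_continuousMap_eqOn (fiberAverage q x p)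
  have hμ := isProbabilityMeasure_sum_smul_dirac hq hq1 x
  have hgame : ∀ u v, ∫ w, icIntegrand F l (w : Euc n) (P w) u v ∂(∑ i, ENNReal.ofReal (q i) •
      Measure.dirac (x i)) = ∑ i, q i * icIntegrand F l (z i) (p i) u v := by
    intro u v
    rw [integral_sum_smul_dirac hq]
    simp only [icIntegrand, mul_add, Finset.sum_add_distrib, hP (mem_range_self _)]
    rw [sum_mul_inner_fiberAverage hq x p fun w => F w u v]
  simpa only [HasGameValue, hgame] using h3 _ hμ P

lemma IsaacsIC4.isaacsIC5 [MetricSpace U] [CompactSpace U] [Nonempty U] [MetricSpace V]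
    [CompactSpace V] [Nonempty V] (hZc : IsCompact Zs)
    (hFc : Continuous fun q : Euc n × U × V => F q.1 q.2.1 q.2.2)
    (hlc : Continuous fun q : Euc n × U × V => l q.1 q.2.1 q.2.2) (h4 : IsaacsIC4 Zs F l) :
    IsaacsIC5 Zs F l := by
  intro μ _ Φ p
  have := isCompact_iff_compactSpace.1 hZc
  refine HasGameValue.integral_of_sum μ
    (hFc.icIntegrand hlc (by fun_prop) (by fun_prop) (by fun_prop) (by fun_prop))
    fun k q c hq hq1 => ?_
  have hk : 1 ≤ k := Nat.one_le_iff_ne_zero.2 (by rintro rfl; simp at hq1)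
  exact h4 k hk q hq hq1 (fun j => Φ (c j)) (fun j => (Φ (c j)).2) (fun j => p (c j))

lemma IsaacsIC5.isaacsIC3 (h5 : IsaacsIC5 Zs F l) : IsaacsIC3 Zs F l :=
  fun μ hμ p => h5 μ hμ (.id _) p

end Isaacs

theorem isaacs_conditions_equivalent_general
    (n : ℕ) (Zs : Set (Euc n)) (hZc : IsCompact Zs)
    (U V : Type) [MetricSpace U] [CompactSpace U] [Nonempty U]
    [MetricSpace V] [CompactSpace V] [Nonempty V]
    (F : Euc n → U → V → Euc n) (l : Euc n → U → V → ℝ)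
    (hFc : Continuous fun q : Euc n × U × V => F q.1 q.2.1 q.2.2)
    (hlc : Continuous fun q : Euc n × U × V => l q.1 q.2.1 q.2.2) :
    ((∀ μ : Measure ↥Zs, IsProbabilityMeasure μ →
        ∀ p : C(↥Zs, Euc n),
          (⨅ u : U, ⨆ v : V, ∫ z, icIntegrand F l (z : Euc n) (p z) u v ∂μ) =
            ⨆ v : V, ⨅ u : U, ∫ z, icIntegrand F l (z : Euc n) (p z) u v ∂μ) ↔
      (∀ I : ℕ, 1 ≤ I → ∀ q : Fin I → ℝ, (∀ i, 0 ≤ q i) → (∑ i, q i) = 1 →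
        ∀ z : Fin I → Euc n, (∀ i, z i ∈ Zs) → ∀ p : Fin I → Euc n,
          (⨅ u : U, ⨆ v : V, ∑ i, q i * icIntegrand F l (z i) (p i) u v) =
            ⨆ v : V, ⨅ u : U, ∑ i, q i * icIntegrand F l (z i) (p i) u v)) ∧
    ((∀ μ : Measure ↥Zs, IsProbabilityMeasure μ →
        ∀ p : C(↥Zs, Euc n),
          (⨅ u : U, ⨆ v : V, ∫ z, icIntegrand F l (z : Euc n) (p z) u v ∂μ) =
            ⨆ v : V, ⨅ u : U, ∫ z, icIntegrand F l (z : Euc n) (p z) u v ∂μ) ↔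
      (∀ μ : Measure ↥Zs, IsProbabilityMeasure μ →
        ∀ Φ : C(↥Zs, ↥Zs), ∀ p : C(↥Zs, Euc n),
          (⨅ u : U, ⨆ v : V, ∫ z, icIntegrand F l ((Φ z : Euc n)) (p z) u v ∂μ) =
            ⨆ v : V, ⨅ u : U, ∫ z, icIntegrand F l ((Φ z : Euc n)) (p z) u v ∂μ)) := by
  have h34 : IsaacsIC3 Zs F l → IsaacsIC4 Zs F l := IsaacsIC3.isaacsIC4
  have h45 : IsaacsIC4 Zs F l → IsaacsIC5 Zs F l := IsaacsIC4.isaacsIC5 hZc hFc hlc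
  have h53 : IsaacsIC5 Zs F l → IsaacsIC3 Zs F l := IsaacsIC5.isaacsIC3
  exact ⟨⟨h34, h53 ∘ h45⟩, ⟨h45 ∘ h34, h53⟩⟩

/-- Equivalence of the Isaacs conditions (IC3), (IC4) and (IC5). -/
theorem isaacs_conditions_equivalent
    (n : ℕ) (Zs : Set (Euc n)) (hZc : IsCompact Zs) (hZn : Zs.Nonempty)
    (U V : Type) [MetricSpace U] [CompactSpace U] [Nonempty U]
    [MetricSpace V] [CompactSpace V] [Nonempty V]
    (F : Euc n → U → V → Euc n) (l : Euc n → U → V → ℝ)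
    (hFc : Continuous fun q : Euc n × U × V => F q.1 q.2.1 q.2.2)
    (hlc : Continuous fun q : Euc n × U × V => l q.1 q.2.1 q.2.2)
    (hFb : ∃ M : ℝ, ∀ w a b, ‖F w a b‖ ≤ M)
    (hlb : ∃ M : ℝ, ∀ w a b, |l w a b| ≤ M) :
    ((∀ μ : Measure ↥Zs, IsProbabilityMeasure μ →
        ∀ p : C(↥Zs, Euc n),
          (⨅ u : U, ⨆ v : V, ∫ z, icIntegrand F l (z : Euc n) (p z) u v ∂μ) =
            ⨆ v : V, ⨅ u : U, ∫ z, icIntegrand F l (z : Euc n) (p z) u v ∂μ) ↔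
      (∀ I : ℕ, 1 ≤ I → ∀ q : Fin I → ℝ, (∀ i, 0 ≤ q i) → (∑ i, q i) = 1 →
        ∀ z : Fin I → Euc n, (∀ i, z i ∈ Zs) → ∀ p : Fin I → Euc n,
          (⨅ u : U, ⨆ v : V, ∑ i, q i * icIntegrand F l (z i) (p i) u v) =
            ⨆ v : V, ⨅ u : U, ∑ i, q i * icIntegrand F l (z i) (p i) u v)) ∧
    ((∀ μ : Measure ↥Zs, IsProbabilityMeasure μ →
        ∀ p : C(↥Zs, Euc n),
          (⨅ u : U, ⨆ v : V, ∫ z, icIntegrand F l (z : Euc n) (p z) u v ∂μ) =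
            ⨆ v : V, ⨅ u : U, ∫ z, icIntegrand F l (z : Euc n) (p z) u v ∂μ) ↔
      (∀ μ : Measure ↥Zs, IsProbabilityMeasure μ →
        ∀ Φ : C(↥Zs, ↥Zs), ∀ p : C(↥Zs, Euc n),
          (⨅ u : U, ⨆ v : V, ∫ z, icIntegrand F l ((Φ z : Euc n)) (p z) u v ∂μ) =
            ⨆ v : V, ⨅ u : U, ∫ z, icIntegrand F l ((Φ z : Euc n)) (p z) u v ∂μ)) :=
  isaacs_conditions_equivalent_general n Zs hZc U V F l hFc hlc
end
end

section
/- Let Z be a nonempty compact subset of ℝ^{n+1}, μ₀ a Borel probability measure on Z, U and V nonempty compact metric spaces, L_F, L_ℓ ≥ 0, and let F : ℝ^{n+1} × U × V → ℝ^{n+1} and ℓ : ℝ^{n+1} × U × V → ℝ be bounded continuous with ‖F(w,u,v) − F(w',u,v)‖ ≤ L_F‖w − w'‖ and |ℓ(w,u,v) − ℓ(w',u,v)| ≤ L_ℓ‖w − w'‖ for all w, w' ∈ ℝ^{n+1}, u ∈ U, v ∈ V. Then for all continuous Φ₁, Φ₂ : Z → Z and every continuous p : Z → ℝ^{n+1}: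 |𝓗(μ₀,Φ₁,p) − 𝓗(μ₀,Φ₂,p)| ≤ ∫_Z (L_ℓ + L_F‖p(z)‖) · ‖Φ₁(z) − Φ₂(z)‖ dμ₀(z). -/
open MeasureTheory Set

noncomputable section

/-!
`𝓗(μ₀,Φ,p)` is the inf-sup over `(u,v)` of `∫ ℓ(Φ z,u,v) + F(Φ z,u,v)·p(z) dμ₀`, and an inf-sup of a
bounded family is `1`-Lipschitz for the sup distance between families. For fixed `(u,v)` the two
integrands differ at `z` by at most `(L_ℓ + L_F‖p(z)‖)‖Φ₁(z) − Φ₂(z)‖`, by the Lipschitz bounds and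
Cauchy–Schwarz; boundedness of `ℓ`, `F` and `p` keeps the inf-sup away from junk values.
-/

section InfSup

variable {ι κ : Type*} [Nonempty ι] [Nonempty κ]

lemma ciInf_ciSup_le_ciInf_ciSup_add {g h : ι → κ → ℝ} {Cg Ch D : ℝ}
    (hg : ∀ u v, |g u v| ≤ Cg) (hh : ∀ u v, |h u v| ≤ Ch) (hgh : ∀ u v, g u v ≤ h u v + D) :
    ⨅ u, ⨆ v, g u v ≤ (⨅ u, ⨆ v, h u v) + D := by
  obtain ⟨v₀⟩ := ‹Nonempty κ›
  have hh_bdd : ∀ u, BddAbove (range (h u)) := fun u =>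
    ⟨Ch, forall_mem_range.2 fun v => (le_abs_self _).trans (hh u v)⟩
  have hg_bdd : BddBelow (range fun u => ⨆ v, g u v) :=
    ⟨-Cg, forall_mem_range.2 fun u =>
      (neg_le_of_abs_le (hg u v₀)).trans (le_ciSup ⟨Cg, forall_mem_range.2 fun v =>
        (le_abs_self _).trans (hg u v)⟩ v₀)⟩
  rw [← sub_le_iff_le_add]
  refine le_ciInf fun u => sub_le_iff_le_add.2 ?_
  calc ⨅ u, ⨆ v, g u v ≤ ⨆ v, g u v := ciInf_le hg_bdd u
    _ ≤ (⨆ v, h u v) + D :=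
      ciSup_le fun v => (hgh u v).trans (add_le_add_left (le_ciSup (hh_bdd u) v) D)

lemma abs_ciInf_ciSup_sub_le {g h : ι → κ → ℝ} {C D : ℝ}
    (hg : ∀ u v, |g u v| ≤ C) (hgh : ∀ u v, |g u v - h u v| ≤ D) :
    |(⨅ u, ⨆ v, g u v) - ⨅ u, ⨆ v, h u v| ≤ D := by
  have hh : ∀ u v, |h u v| ≤ C + D := fun u v => by
    have := abs_sub_abs_le_abs_sub (h u v) (g u v)
    rw [abs_sub_comm] at this
    linarith [hg u v, hgh u v]
  rw [abs_sub_le_iff]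
  constructor
  · have := ciInf_ciSup_le_ciInf_ciSup_add hg hh fun u v => by
      linarith [le_abs_self (g u v - h u v), hgh u v]
    linarith
  · have := ciInf_ciSup_le_ciInf_ciSup_add hh hg fun u v => by
      linarith [neg_abs_le (g u v - h u v), hgh u v]
    linarith

end InfSup

section Hamiltonian

variable {X E U V : Type*} [NormedAddCommGroup E] [InnerProductSpace ℝ E]

lemma abs_add_inner_le (a : ℝ) (f q : E) : |a + inner ℝ f q| ≤ |a| + ‖f‖ * ‖q‖ :=
  (abs_add_le _ _).trans (add_le_add le_rfl (abs_real_inner_le_norm f q))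

lemma abs_add_inner_sub_add_inner_le (a a' : ℝ) (f f' q : E) :
    |(a + inner ℝ f q) - (a' + inner ℝ f' q)| ≤ |a - a'| + ‖f - f'‖ * ‖q‖ := by
  have : (a + inner ℝ f q) - (a' + inner ℝ f' q) = (a - a') + inner ℝ (f - f') q := by
    rw [inner_sub_left]; ring
  rw [this]
  exact abs_add_inner_le _ _ _

def hamiltonianIntegrand (l : E → U → V → ℝ) (F : E → U → V → E) (φ p : X → E)
    (u : U) (v : V) (z : X) : ℝ :=
  l (φ z) u v + inner ℝ (F (φ z) u v) (p z)

variable {l : E → U → V → ℝ} {F : E → U → V → E} {φ φ' p : X → E}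

lemma abs_hamiltonianIntegrand_sub_le {Ll LF : ℝ}
    (hlL : ∀ w w' u v, |l w u v - l w' u v| ≤ Ll * ‖w - w'‖)
    (hFL : ∀ w w' u v, ‖F w u v - F w' u v‖ ≤ LF * ‖w - w'‖) (u : U) (v : V) (z : X) :
    |hamiltonianIntegrand l F φ p u v z - hamiltonianIntegrand l F φ' p u v z| ≤
      (Ll + LF * ‖p z‖) * ‖φ z - φ' z‖ :=
  calc _ ≤ |l (φ z) u v - l (φ' z) u v| + ‖F (φ z) u v - F (φ' z) u v‖ * ‖p z‖ :=
        abs_add_inner_sub_add_inner_le _ _ _ _ _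
    _ ≤ Ll * ‖φ z - φ' z‖ + LF * ‖φ z - φ' z‖ * ‖p z‖ := by
        gcongr
        exacts [hlL _ _ u v, hFL _ _ u v]
    _ = (Ll + LF * ‖p z‖) * ‖φ z - φ' z‖ := by ring

lemma abs_integral_hamiltonianIntegrand_le [MeasurableSpace X] {μ : Measure X}
    [IsProbabilityMeasure μ] {Ml MF Cp : ℝ}
    (hMl : ∀ w u v, |l w u v| ≤ Ml) (hMF : ∀ w u v, ‖F w u v‖ ≤ MF)
    (hCp : ∀ z, ‖p z‖ ≤ Cp) (u : U) (v : V) :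
    |∫ z, hamiltonianIntegrand l F φ p u v z ∂μ| ≤ Ml + MF * Cp := by
  have hMF0 : 0 ≤ MF := (norm_nonneg _).trans (hMF 0 u v)
  have hbound : ∀ z, ‖hamiltonianIntegrand l F φ p u v z‖ ≤ Ml + MF * Cp := fun z =>
    (abs_add_inner_le _ _ _).trans
      (add_le_add (hMl _ u v) (mul_le_mul (hMF _ u v) (hCp z) (norm_nonneg _) hMF0))
  rw [← Real.norm_eq_abs]
  simpa using norm_integral_le_of_norm_le_const (μ := μ) (ae_of_all _ hbound)

variable [TopologicalSpace X] [TopologicalSpace U] [TopologicalSpace V]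

lemma continuous_hamiltonianIntegrand
    (hFc : Continuous fun q : E × U × V => F q.1 q.2.1 q.2.2)
    (hlc : Continuous fun q : E × U × V => l q.1 q.2.1 q.2.2)
    (hφ : Continuous φ) (hp : Continuous p) (u : U) (v : V) :
    Continuous (hamiltonianIntegrand l F φ p u v) := by
  have hpair : Continuous fun z => (φ z, u, v) := hφ.prodMk continuous_const
  exact (hlc.comp hpair).add ((hFc.comp hpair).inner hp)

lemma abs_integral_hamiltonianIntegrand_sub_le [CompactSpace X] [MeasurableSpace X]
    [OpensMeasurableSpace X] {μ : Measure X} [IsFiniteMeasure μ] {Ll LF : ℝ}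
    (hFc : Continuous fun q : E × U × V => F q.1 q.2.1 q.2.2)
    (hlc : Continuous fun q : E × U × V => l q.1 q.2.1 q.2.2)
    (hlL : ∀ w w' u v, |l w u v - l w' u v| ≤ Ll * ‖w - w'‖)
    (hFL : ∀ w w' u v, ‖F w u v - F w' u v‖ ≤ LF * ‖w - w'‖)
    (hφ : Continuous φ) (hφ' : Continuous φ') (hp : Continuous p) (u : U) (v : V) :
    |∫ z, hamiltonianIntegrand l F φ p u v z ∂μ - ∫ z, hamiltonianIntegrand l F φ' p u v z ∂μ| ≤
      ∫ z, (Ll + LF * ‖p z‖) * ‖φ z - φ' z‖ ∂μ := by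
  have integrable {f : X → ℝ} (hf : Continuous f) : Integrable f μ :=
    hf.integrable_of_hasCompactSupport (HasCompactSupport.of_compactSpace _)
  rw [← integral_sub (integrable (continuous_hamiltonianIntegrand hFc hlc hφ hp u v))
    (integrable (continuous_hamiltonianIntegrand hFc hlc hφ' hp u v)), ← Real.norm_eq_abs]
  exact norm_integral_le_of_norm_le
    (integrable ((continuous_const.add (continuous_const.mul hp.norm)).mul (hφ.sub hφ').norm))
    (ae_of_all _ (abs_hamiltonianIntegrand_sub_le hlL hFL u v))

end Hamiltonian

theorem hamiltonian_stability_general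
    (n : ℕ) (Zs : Set (Euc n)) (hZc : IsCompact Zs)
    (μ₀ : Measure ↥Zs) [IsProbabilityMeasure μ₀]
    (U V : Type) [MetricSpace U] [Nonempty U]
    [MetricSpace V] [Nonempty V]
    (LF Ll : ℝ)
    (F : Euc n → U → V → Euc n) (l : Euc n → U → V → ℝ)
    (hFc : Continuous fun q : Euc n × U × V => F q.1 q.2.1 q.2.2)
    (hlc : Continuous fun q : Euc n × U × V => l q.1 q.2.1 q.2.2)
    (hFb : ∃ M : ℝ, ∀ w a b, ‖F w a b‖ ≤ M)
    (hlb : ∃ M : ℝ, ∀ w a b, |l w a b| ≤ M)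
    (hFL : ∀ w w' a b, ‖F w a b - F w' a b‖ ≤ LF * ‖w - w'‖)
    (hlL : ∀ w w' a b, |l w a b - l w' a b| ≤ Ll * ‖w - w'‖)
    (Φ₁ Φ₂ : C(↥Zs, ↥Zs)) (p : C(↥Zs, Euc n)) :
    |(⨅ u : U, ⨆ v : V,
        ∫ z, (l ((Φ₁ z : Euc n)) u v + (inner ℝ (F ((Φ₁ z : Euc n)) u v) (p z) : ℝ)) ∂μ₀) -
      (⨅ u : U, ⨆ v : V,
        ∫ z, (l ((Φ₂ z : Euc n)) u v + (inner ℝ (F ((Φ₂ z : Euc n)) u v) (p z) : ℝ)) ∂μ₀)| ≤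
      ∫ z, (Ll + LF * ‖p z‖) * ‖(Φ₁ z : Euc n) - (Φ₂ z : Euc n)‖ ∂μ₀ := by
  have := isCompact_iff_compactSpace.mp hZc
  obtain ⟨MF, hMF⟩ := hFb
  obtain ⟨Ml, hMl⟩ := hlb
  obtain ⟨Cp, hCp⟩ := isCompact_univ.exists_bound_of_continuousOn p.continuous.continuousOn
  have hΦ₁ : Continuous fun z => (Φ₁ z : Euc n) := continuous_subtype_val.comp Φ₁.continuous
  have hΦ₂ : Continuous fun z => (Φ₂ z : Euc n) := continuous_subtype_val.comp Φ₂.continuous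
  exact abs_ciInf_ciSup_sub_le
    (abs_integral_hamiltonianIntegrand_le hMl hMF fun z => hCp z (mem_univ z))
    (abs_integral_hamiltonianIntegrand_sub_le hFc hlc hlL hFL hΦ₁ hΦ₂ p.continuous)

/-- Stability estimate for the Hamiltonian `𝓗(μ₀,Φ,p)` with respect to `Φ`. -/
theorem hamiltonian_stability
    (n : ℕ) (Zs : Set (Euc n)) (hZc : IsCompact Zs) (hZn : Zs.Nonempty)
    (μ₀ : Measure ↥Zs) [IsProbabilityMeasure μ₀]
    (U V : Type) [MetricSpace U] [CompactSpace U] [Nonempty U]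
    [MetricSpace V] [CompactSpace V] [Nonempty V]
    (LF Ll : ℝ) (hLF : 0 ≤ LF) (hLl : 0 ≤ Ll)
    (F : Euc n → U → V → Euc n) (l : Euc n → U → V → ℝ)
    (hFc : Continuous fun q : Euc n × U × V => F q.1 q.2.1 q.2.2)
    (hlc : Continuous fun q : Euc n × U × V => l q.1 q.2.1 q.2.2)
    (hFb : ∃ M : ℝ, ∀ w a b, ‖F w a b‖ ≤ M)
    (hlb : ∃ M : ℝ, ∀ w a b, |l w a b| ≤ M)
    (hFL : ∀ w w' a b, ‖F w a b - F w' a b‖ ≤ LF * ‖w - w'‖)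
    (hlL : ∀ w w' a b, |l w a b - l w' a b| ≤ Ll * ‖w - w'‖)
    (Φ₁ Φ₂ : C(↥Zs, ↥Zs)) (p : C(↥Zs, Euc n)) :
    |(⨅ u : U, ⨆ v : V,
        ∫ z, (l ((Φ₁ z : Euc n)) u v + (inner ℝ (F ((Φ₁ z : Euc n)) u v) (p z) : ℝ)) ∂μ₀) -
      (⨅ u : U, ⨆ v : V,
        ∫ z, (l ((Φ₂ z : Euc n)) u v + (inner ℝ (F ((Φ₂ z : Euc n)) u v) (p z) : ℝ)) ∂μ₀)| ≤
      ∫ z, (Ll + LF * ‖p z‖) * ‖(Φ₁ z : Euc n) - (Φ₂ z : Euc n)‖ ∂μ₀ :=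
  hamiltonian_stability_general n Zs hZc μ₀ U V LF Ll F l hFc hlc hFb hlb hFL hlL Φ₁ Φ₂ p
end
end

section
/- Let α : 𝒱 → 𝒰 be NAD with some delay τ_α > 0 and β : 𝒰 → 𝒱 be NAD with some delay τ_β > 0. Then there exists a pair (u*, v*) ∈ 𝒰 × 𝒱 such that α(v*) = u* a.e. on [0,∞) and β(u*) = v* a.e. on [0,∞). Moreover this pair is unique up to a.e. equality: if (u, v) ∈ 𝒰 × 𝒱 also satisfies α(v) = u a.e. on [0,∞) and β(u) = v a.e. on [0,∞), then u = u* a.e. on [0,∞) and v = v* a.e. on [0,∞). -/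
open MeasureTheory Set

/-- The set of Lebesgue-measurable controls with values in `U`. -/
def Control (U : Type) [MeasurableSpace U] : Type := {u : ℝ → U // Measurable u}

/-- A strategy `α : 𝒱 → 𝒰` is nonanticipative with delay `τ` (NAD). -/
def IsNAD {U V : Type} [MeasurableSpace U] [MeasurableSpace V] (τ : ℝ)
    (α : Control V → Control U) : Prop :=
  ∀ (v₁ v₂ : Control V) (t : ℝ), 0 ≤ t →
    (∀ᵐ s ∂(volume.restrict (Icc (0 : ℝ) t)), v₁.1 s = v₂.1 s) →
    ∀ᵐ s ∂(volume.restrict (Icc (0 : ℝ) (t + τ))), (α v₁).1 s = (α v₂).1 s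

/-- Anything holds a.e. on the degenerate interval `[0,0]`. -/
lemma aeIcc_zero {P : ℝ → Prop} : ∀ᵐ s ∂(volume.restrict (Icc (0 : ℝ) 0)), P s := by
  have h : volume.restrict (Icc (0 : ℝ) 0) = 0 := by
    rw [Measure.restrict_eq_zero]; simp
  rw [h]; simp

/-- If something holds a.e. on each `[0, n τ]`, it holds a.e. on `[0, ∞)`. -/
lemma aeIci_of_aeIcc {τ : ℝ} (hτ : 0 < τ) {P : ℝ → Prop}
    (h : ∀ n : ℕ, ∀ᵐ s ∂(volume.restrict (Icc (0 : ℝ) ((n : ℝ) * τ))), P s) :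
    ∀ᵐ s ∂(volume.restrict (Ici (0 : ℝ))), P s := by
  have hsub : Ici (0 : ℝ) ⊆ ⋃ n : ℕ, Icc (0 : ℝ) ((n : ℝ) * τ) := by
    intro s hs
    obtain ⟨n, hn⟩ := exists_nat_ge (s / τ)
    exact mem_iUnion.mpr ⟨n, hs, (div_le_iff₀ hτ).mp hn⟩
  exact ae_restrict_of_ae_restrict_of_subset hsub
    ((ae_restrict_iUnion_iff _ _).mpr h)

/-- Transfer: if `P` holds a.e. on `[0,a]`, then a.e. on `[0,b]` we have `s ≤ a → P s`. -/
lemma ae_le_imp {a b : ℝ} {P : ℝ → Prop}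
    (h : ∀ᵐ s ∂(volume.restrict (Icc (0 : ℝ) a)), P s) :
    ∀ᵐ s ∂(volume.restrict (Icc (0 : ℝ) b)), s ≤ a → P s := by
  have h2 : ∀ᵐ s ∂((volume.restrict (Icc (0 : ℝ) b)).restrict (Iic a)), P s := by
    rw [Measure.restrict_restrict measurableSet_Iic]
    exact ae_restrict_of_ae_restrict_of_subset
      (show Iic a ∩ Icc (0 : ℝ) b ⊆ Icc (0 : ℝ) a from fun x hx => ⟨hx.2.1, hx.1⟩) h
  exact ae_imp_of_ae_restrict h2

/-- Pasting countably many measurable functions along a measurable index is measurable. -/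
lemma measurable_pick {X : Type} [MeasurableSpace X] {g : ℕ → ℝ → X}
    (hg : ∀ n, Measurable (g n)) {n : ℝ → ℕ} (hn : Measurable n) :
    Measurable fun s => g (n s) s := by
  have h : Measurable fun p : ℝ × ℕ => g p.2 p.1 :=
    measurable_from_prod_countable_left fun k => hg k
  exact h.comp (measurable_id.prodMk hn)

/-- Given a pair of NAD strategies, there is a unique (up to a.e. equality) pair of
controls consistent with both of them. -/
theorem nad_fixed_point
    (U V : Type) [MetricSpace U] [CompactSpace U] [Nonempty U]
    [MeasurableSpace U] [BorelSpace U]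
    [MetricSpace V] [CompactSpace V] [Nonempty V]
    [MeasurableSpace V] [BorelSpace V]
    (τα τβ : ℝ) (hτα : 0 < τα) (hτβ : 0 < τβ)
    (α : Control V → Control U) (hα : IsNAD τα α)
    (β : Control U → Control V) (hβ : IsNAD τβ β) :
    ∃ (ustar : Control U) (vstar : Control V),
      ((∀ᵐ s ∂(volume.restrict (Ici (0 : ℝ))), (α vstar).1 s = ustar.1 s) ∧
        ∀ᵐ s ∂(volume.restrict (Ici (0 : ℝ))), (β ustar).1 s = vstar.1 s) ∧
      ∀ (u : Control U) (v : Control V),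
        (∀ᵐ s ∂(volume.restrict (Ici (0 : ℝ))), (α v).1 s = u.1 s) →
        (∀ᵐ s ∂(volume.restrict (Ici (0 : ℝ))), (β u).1 s = v.1 s) →
        (∀ᵐ s ∂(volume.restrict (Ici (0 : ℝ))), u.1 s = ustar.1 s) ∧
          ∀ᵐ s ∂(volume.restrict (Ici (0 : ℝ))), v.1 s = vstar.1 s := by
  classical
  set τ : ℝ := τα + τβ with hτdef
  have hτ : 0 < τ := by positivity
  -- the composite map and its NAD property with delay τ
  set γ : Control V → Control V := fun v => β (α v) with hγdef
  have hγ : ∀ (v₁ v₂ : Control V) (t : ℝ), 0 ≤ t →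
      (∀ᵐ s ∂(volume.restrict (Icc (0 : ℝ) t)), v₁.1 s = v₂.1 s) →
      ∀ᵐ s ∂(volume.restrict (Icc (0 : ℝ) (t + τ))), (γ v₁).1 s = (γ v₂).1 s := by
    intro v₁ v₂ t ht h
    have h1 := hα v₁ v₂ t ht h
    have h2 := hβ (α v₁) (α v₂) (t + τα) (by linarith) h1
    rwa [show t + τα + τβ = t + τ by rw [hτdef]; ring] at h2
  -- iterates of γ coincide a.e. on [0, n τ]
  have hiter : ∀ (n : ℕ) (v₁ v₂ : Control V),
      ∀ᵐ s ∂(volume.restrict (Icc (0 : ℝ) ((n : ℝ) * τ))),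
        (γ^[n] v₁).1 s = (γ^[n] v₂).1 s := by
    intro n
    induction n with
    | zero => intro v₁ v₂; simpa using (aeIcc_zero (P := fun s => v₁.1 s = v₂.1 s))
    | succ m ih =>
      intro v₁ v₂
      have h := hγ (γ^[m] v₁) (γ^[m] v₂) ((m : ℝ) * τ)
        (by positivity) (ih v₁ v₂)
      rw [show ((m : ℕ) + 1 : ℕ) = m + 1 from rfl]
      rw [show (((m + 1 : ℕ) : ℝ)) * τ = (m : ℝ) * τ + τ by push_cast; ring]
      simpa [Function.iterate_succ_apply'] using h
  -- the iteration sequence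
  have hV : Nonempty V := inferInstance
  set v₀ : Control V := ⟨fun _ => Classical.arbitrary V, measurable_const⟩ with hv₀
  set vseq : ℕ → Control V := fun n => γ^[n] v₀ with hvseq
  have hseq : ∀ n m : ℕ, n ≤ m →
      ∀ᵐ s ∂(volume.restrict (Icc (0 : ℝ) ((n : ℝ) * τ))),
        (vseq m).1 s = (vseq n).1 s := by
    intro n m hnm
    have h := hiter n (γ^[m - n] v₀) v₀
    have hm : γ^[n] (γ^[m - n] v₀) = vseq m := by
      rw [hvseq, ← Function.iterate_add_apply, Nat.add_sub_cancel' hnm]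
    rwa [hm] at h
  -- the pasted fixed point
  set vfun : ℝ → V := fun s => (vseq (⌊s / τ⌋₊ + 1)).1 s with hvfun
  have hvfun_meas : Measurable vfun := by
    apply measurable_pick (fun n => (vseq n).2)
    exact (Nat.measurable_floor.comp (measurable_id.div_const τ)).add measurable_const
  set vstar : Control V := ⟨vfun, hvfun_meas⟩ with hvstar
  -- vstar agrees with vseq n a.e. on [0, n τ]
  have hstar : ∀ n : ℕ, ∀ᵐ s ∂(volume.restrict (Icc (0 : ℝ) ((n : ℝ) * τ))),
      vstar.1 s = (vseq n).1 s := by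
    intro n
    have hall : ∀ᵐ s ∂(volume.restrict (Icc (0 : ℝ) ((n : ℝ) * τ))),
        ∀ k : ℕ, s ≤ (k : ℝ) * τ → (vseq k).1 s = (vseq n).1 s := by
      rw [ae_all_iff]
      intro k
      rcases le_or_gt k n with hk | hk
      · have h := hseq k n hk
        exact ae_le_imp ((h.mono fun s hs => hs.symm))
      · have h := hseq n k hk.le
        exact h.mono fun s hs _ => hs
    filter_upwards [hall] with s hs
    refine hs (⌊s / τ⌋₊ + 1) ?_
    have h1 : s / τ < (⌊s / τ⌋₊ : ℝ) + 1 := Nat.lt_floor_add_one _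
    have h2 : s < ((⌊s / τ⌋₊ : ℝ) + 1) * τ := (div_lt_iff₀ hτ).mp h1
    push_cast
    linarith
  -- fixed point property on each [0, n τ]
  have hfix : ∀ n : ℕ, ∀ᵐ s ∂(volume.restrict (Icc (0 : ℝ) ((n : ℝ) * τ))),
      (γ vstar).1 s = vstar.1 s := by
    intro n
    have h1 := hγ vstar (vseq n) ((n : ℝ) * τ) (by positivity) (hstar n)
    have h2 : ∀ᵐ s ∂(volume.restrict (Icc (0 : ℝ) ((n : ℝ) * τ + τ))),
        vstar.1 s = (vseq (n + 1)).1 s := by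
      have := hstar (n + 1)
      rwa [show (((n + 1 : ℕ) : ℝ)) * τ = (n : ℝ) * τ + τ by push_cast; ring] at this
    have h3 : γ (vseq n) = vseq (n + 1) := by
      rw [hvseq]; simp [Function.iterate_succ_apply']
    rw [h3] at h1
    have h4 : ∀ᵐ s ∂(volume.restrict (Icc (0 : ℝ) ((n : ℝ) * τ + τ))),
        (γ vstar).1 s = vstar.1 s := by
      filter_upwards [h1, h2] with s e1 e2
      rw [e1, e2]
    exact ae_restrict_of_ae_restrict_of_subset
      (Icc_subset_Icc_right (by linarith)) h4
  have hfixIci : ∀ᵐ s ∂(volume.restrict (Ici (0 : ℝ))), (β (α vstar)).1 s = vstar.1 s :=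
    aeIci_of_aeIcc hτ hfix
  refine ⟨α vstar, vstar, ⟨Filter.Eventually.of_forall fun s => rfl, hfixIci⟩, ?_⟩
  -- uniqueness
  intro u v hu hv
  have hvv : ∀ n : ℕ, ∀ᵐ s ∂(volume.restrict (Icc (0 : ℝ) ((n : ℝ) * τ))),
      v.1 s = vstar.1 s := by
    intro n
    induction n with
    | zero => simpa using (aeIcc_zero (P := fun s => v.1 s = vstar.1 s))
    | succ m ih =>
      have h1 := hα v vstar ((m : ℝ) * τ) (by positivity) ih
      have hu' : ∀ᵐ s ∂(volume.restrict (Icc (0 : ℝ) ((m : ℝ) * τ + τα))),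
          (α v).1 s = u.1 s :=
        ae_restrict_of_ae_restrict_of_subset (fun x hx => hx.1) hu
      have h2 : ∀ᵐ s ∂(volume.restrict (Icc (0 : ℝ) ((m : ℝ) * τ + τα))),
          u.1 s = (α vstar).1 s := by
        filter_upwards [h1, hu'] with s e1 e2
        rw [← e2, e1]
      have h3 := hβ u (α vstar) ((m : ℝ) * τ + τα) (by positivity) h2
      have hv' : ∀ᵐ s ∂(volume.restrict (Icc (0 : ℝ) ((m : ℝ) * τ + τα + τβ))),
          (β u).1 s = v.1 s :=
        ae_restrict_of_ae_restrict_of_subset (fun x hx => hx.1) hv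
      have hfix' : ∀ᵐ s ∂(volume.restrict (Icc (0 : ℝ) ((m : ℝ) * τ + τα + τβ))),
          (β (α vstar)).1 s = vstar.1 s :=
        ae_restrict_of_ae_restrict_of_subset (fun x hx => hx.1) hfixIci
      have h4 : ∀ᵐ s ∂(volume.restrict (Icc (0 : ℝ) ((m : ℝ) * τ + τα + τβ))),
          v.1 s = vstar.1 s := by
        filter_upwards [h3, hv', hfix'] with s e3 ev ef
        rw [← ev, e3, ef]
      rwa [show (((m + 1 : ℕ) : ℝ)) * τ = (m : ℝ) * τ + τα + τβ by
        rw [hτdef]; push_cast; ring]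
  have hvIci : ∀ᵐ s ∂(volume.restrict (Ici (0 : ℝ))), v.1 s = vstar.1 s :=
    aeIci_of_aeIcc hτ hvv
  refine ⟨?_, hvIci⟩
  -- u = α vstar a.e. on [0, ∞)
  have huu : ∀ n : ℕ, ∀ᵐ s ∂(volume.restrict (Icc (0 : ℝ) ((n : ℝ) * τ))),
      u.1 s = (α vstar).1 s := by
    intro n
    have h1 := hα v vstar ((n : ℝ) * τ) (by positivity) (hvv n)
    have hu' : ∀ᵐ s ∂(volume.restrict (Icc (0 : ℝ) ((n : ℝ) * τ + τα))),
        (α v).1 s = u.1 s :=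
      ae_restrict_of_ae_restrict_of_subset (fun x hx => hx.1) hu
    have h2 : ∀ᵐ s ∂(volume.restrict (Icc (0 : ℝ) ((n : ℝ) * τ + τα))),
        u.1 s = (α vstar).1 s := by
      filter_upwards [h1, hu'] with s e1 e2
      rw [← e2, e1]
    exact ae_restrict_of_ae_restrict_of_subset
      (Icc_subset_Icc_right (by linarith)) h2
  exact aeIci_of_aeIcc hτ huu
end

section
/- Let τ > 0 and let A : [0,∞) × ℝ^{n+1} × 𝒱 → 𝒰 satisfy: (i) for all T₁, T₂ ≥ 0, all z₁, z₂ ∈ ℝ^{n+1} and all v ∈ 𝒱, A(T₁,z₁,v) = A(T₂,z₂,v) a.e. on [0, min(T₁,T₂)+τ]; (ii) for all (T,z) ∈ [0,∞) × ℝ^{n+1}, all v₁, v₂ ∈ 𝒱 and all t ≥ 0, if v₁ = v₂ a.e. on [0,t] then A(T,z,v₁) = A(T,z,v₂) a.e. on [0,t+τ]. Then there exists a map α : 𝒱 → 𝒰 which is NAD with delay τ and which satisfies α(v) = A(T,z,v) a.e. on [0, T+τ] for every (T,z,v) ∈ [0,∞) × ℝ^{n+1} × 𝒱. Moreover α is unique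 up to a.e. equality: any α' : 𝒱 → 𝒰 satisfying α'(v) = A(T,z,v) a.e. on [0,T+τ] for all (T,z,v) satisfies α'(v) = α(v) a.e. on [0,∞) for every v ∈ 𝒱. -/
open MeasureTheory Set

noncomputable section

/-- Any signal-dependent NAD strategy `A` induces a unique NAD strategy `α`
which coincides with `A(T,z,·)` on `[0,T+τ]` for every `(T,z)`. -/
theorem snad_induces_unique_nad
    (n : ℕ) (U V : Type)
    [MetricSpace U] [CompactSpace U] [Nonempty U] [MeasurableSpace U] [BorelSpace U]
    [MetricSpace V] [CompactSpace V] [Nonempty V] [MeasurableSpace V] [BorelSpace V]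
    (τ : ℝ) (hτ : 0 < τ)
    (A : ℝ → Euc n → Control V → Control U)
    (hA1 : ∀ T₁ T₂ : ℝ, 0 ≤ T₁ → 0 ≤ T₂ → ∀ z₁ z₂ : Euc n, ∀ v : Control V,
      ∀ᵐ s ∂(volume.restrict (Icc (0 : ℝ) (min T₁ T₂ + τ))),
        (A T₁ z₁ v).1 s = (A T₂ z₂ v).1 s)
    (hA2 : ∀ T : ℝ, 0 ≤ T → ∀ z : Euc n, ∀ v₁ v₂ : Control V, ∀ t : ℝ, 0 ≤ t →
      (∀ᵐ s ∂(volume.restrict (Icc (0 : ℝ) t)), v₁.1 s = v₂.1 s) →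
      ∀ᵐ s ∂(volume.restrict (Icc (0 : ℝ) (t + τ))), (A T z v₁).1 s = (A T z v₂).1 s) :
    ∃ α : Control V → Control U, IsNAD τ α ∧
      (∀ T : ℝ, 0 ≤ T → ∀ z : Euc n, ∀ v : Control V,
        ∀ᵐ s ∂(volume.restrict (Icc (0 : ℝ) (T + τ))), (α v).1 s = (A T z v).1 s) ∧
      ∀ α' : Control V → Control U,
        (∀ T : ℝ, 0 ≤ T → ∀ z : Euc n, ∀ v : Control V,
          ∀ᵐ s ∂(volume.restrict (Icc (0 : ℝ) (T + τ))), (α' v).1 s = (A T z v).1 s) →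
        ∀ v : Control V, ∀ᵐ s ∂(volume.restrict (Ici (0 : ℝ))), (α' v).1 s = (α v).1 s := by
  classical
  set z₀ : Euc n := 0 with hz₀
  -- the glued strategy, on the piece [kτ, (k+1)τ) use A (kτ) z₀
  set f : Control V → ℝ → U := fun v s => (A (τ * (⌊s / τ⌋₊ : ℕ)) z₀ v).1 s with hf
  have hfmeas : ∀ v : Control V, Measurable (f v) := by
    intro v
    have h1 : Measurable fun s : ℝ => (⌊s / τ⌋₊ : ℕ) :=
      Nat.measurable_floor.comp (measurable_id.div_const τ)
    have h2 : Measurable fun p : ℝ × ℕ => (A (τ * (p.2 : ℕ)) z₀ v).1 p.1 :=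
      measurable_from_prod_countable_left fun k => (A (τ * (k : ℕ)) z₀ v).2
    exact h2.comp (measurable_id.prodMk h1)
  set α : Control V → Control U := fun v => ⟨f v, hfmeas v⟩ with hα
  -- key: α coincides with A T z a.e. on [0, T+τ]
  have key : ∀ T : ℝ, 0 ≤ T → ∀ z : Euc n, ∀ v : Control V,
      ∀ᵐ s ∂(volume.restrict (Icc (0 : ℝ) (T + τ))), (α v).1 s = (A T z v).1 s := by
    intro T hT z v
    rw [ae_restrict_iff' measurableSet_Icc]
    have hk : ∀ k : ℕ, ∀ᵐ s ∂(volume : Measure ℝ),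
        s ∈ Icc (0 : ℝ) (min (τ * k) T + τ) →
          (A (τ * (k : ℕ)) z₀ v).1 s = (A T z v).1 s := by
      intro k
      have := hA1 (τ * k) T (by positivity) hT z₀ z v
      rwa [ae_restrict_iff' measurableSet_Icc] at this
    rw [← ae_all_iff] at hk
    filter_upwards [hk] with s hs hsmem
    set k : ℕ := ⌊s / τ⌋₊ with hkdef
    have hlt : s < τ * k + τ := by
      have := Nat.lt_floor_add_one (s / τ)
      have h' : s / τ < (k : ℝ) + 1 := by exact_mod_cast this
      have := (div_lt_iff₀ hτ).1 h'
      nlinarith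
    have : (A (τ * (k : ℕ)) z₀ v).1 s = (A T z v).1 s := by
      have hmem : s ∈ Icc (0 : ℝ) (min (τ * k) T + τ) := by
        refine ⟨hsmem.1, ?_⟩
        rw [← min_add_add_right]
        exact le_min hlt.le hsmem.2
      exact hs k hmem
    simpa [hα, hf] using this
  refine ⟨α, ?_, key, ?_⟩
  · -- NAD
    intro v₁ v₂ t ht hveq
    have h1 := key t ht z₀ v₁
    have h2 := key t ht z₀ v₂
    have h3 := hA2 t ht z₀ v₁ v₂ t ht hveq
    filter_upwards [h1, h2, h3] with s e1 e2 e3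
    rw [e1, e3, ← e2]
  · -- uniqueness
    intro α' hα' v
    rw [ae_restrict_iff' measurableSet_Ici]
    have hk : ∀ k : ℕ, ∀ᵐ s ∂(volume : Measure ℝ),
        s ∈ Icc (0 : ℝ) ((k : ℝ) + τ) → (α' v).1 s = (α v).1 s := by
      intro k
      have h1 := hα' (k : ℝ) (Nat.cast_nonneg k) z₀ v
      have h2 := key (k : ℝ) (Nat.cast_nonneg k) z₀ v
      have h3 : ∀ᵐ s ∂(volume.restrict (Icc (0 : ℝ) ((k : ℝ) + τ))),
          (α' v).1 s = (α v).1 s := by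
        filter_upwards [h1, h2] with s e1 e2
        rw [e1, ← e2]
      rwa [ae_restrict_iff' measurableSet_Icc] at h3
    rw [← ae_all_iff] at hk
    filter_upwards [hk] with s hs hsmem
    exact hs ⌈s⌉₊ ⟨hsmem, le_add_of_le_of_nonneg (Nat.le_ceil s) hτ.le⟩
end
end

section
/- Let n ∈ ℕ, λ > 0, L ≥ 0, M_F > 0, M_ℓ > 0, M_V > 0, T̄ > 0, C_T > 0, C_V > 0 and γ ∈ (0,1]. Then there exists C > 0, depending only on these constants, with the following property. Let U and V be measurable spaces, u : [0,∞) → U and v : [0,∞) → V Lebesgue-measurable controls, ℓ : ℝ^{n+1} × U × V → ℝ with |ℓ| ≤ M_ℓ and |ℓ(w,a,b) − ℓ(w',a,b)| ≤ L‖w − w'‖ for all w, w', a, b, and V̂ : ℝ^{n+1} → ℝ with |V̂| ≤ M_V and |V̂(w) − V̂(w')| ≤ C_V‖w − w'‖^γ for all w, w'. Let z, z' ∈ ℝ^{n+1} and let Z, Z' : [0,∞) → ℝ^{n+1} be trajectories with Z_0 = z and Z'_0 = z' such that t ↦ ℓ(Z_t,u(t),v(t)) and t ↦ ℓ(Z'_t,u(t),v(t))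 are Lebesgue measurable, ‖Z_t − Z'_t‖ ≤ e^{Lt}‖z − z'‖ for all t ≥ 0, and ‖Z_t − Z_s‖ ≤ M_F|t − s| and ‖Z'_t − Z'_s‖ ≤ M_F|t − s| for all s, t ≥ 0. Let T, T' ∈ [0, T̄] with |T − T'| ≤ C_T‖z − z'‖. Then |(∫₀^T e^{−λt} ℓ(Z_t,u(t),v(t)) dt + e^{−λT} V̂(Z_T)) − (∫₀^{T'} e^{−λt} ℓ(Z'_t,u(t),v(t)) dt + e^{−λT'} V̂(Z'_{T'}))| ≤ C(‖z − z'‖ + ‖z − z'‖^γ). -/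
open MeasureTheory Set

noncomputable section

open Real

/-! Split the difference at `T'`. On `[0, T']` the running costs differ pointwise by at most
`L e^{L T̄} ‖z - z'‖` (Lipschitz `ℓ` along the flow estimate); the leftover integral over `[T', T]`
is at most `M_ℓ |T - T'| ≤ M_ℓ C_T ‖z - z'‖`. In the terminal term the discount factors differ by
at most `λ |T - T'|` (`t ↦ e^{-t}` is 1-Lipschitz on `[0, ∞)`), and
`‖Z_T - Z'_{T'}‖ ≤ (e^{L T̄} + M_F C_T) ‖z - z'‖`, which the Hölder continuity of `V̂` turns into
the `‖z - z'‖ ^ γ` term. -/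

lemma abs_exp_neg_sub_exp_neg_le {a b : ℝ} (ha : 0 ≤ a) (hb : 0 ≤ b) :
    |exp (-a) - exp (-b)| ≤ |a - b| := by
  wlog hab : a ≤ b generalizing a b
  · rw [abs_sub_comm, abs_sub_comm a]; exact this hb ha (le_of_not_ge hab)
  have hnonneg : 0 ≤ 1 - exp (a - b) := sub_nonneg.2 (exp_le_one_iff.2 (by linarith))
  have hle : 1 - exp (a - b) ≤ b - a := by linarith [add_one_le_exp (a - b)]
  calc |exp (-a) - exp (-b)| = exp (-a) * (1 - exp (a - b)) := by
        rw [mul_sub, ← exp_add, mul_one, abs_of_nonneg (sub_nonneg.2 (exp_le_exp.2 (by linarith)))]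
        ring_nf
    _ ≤ 1 * (b - a) := mul_le_mul (exp_le_one_iff.2 (by linarith)) hle hnonneg zero_le_one
    _ = |a - b| := by rw [one_mul, abs_sub_comm, abs_of_nonneg (by linarith)]

lemma abs_exp_neg_mul_mul_le {lam t : ℝ} (hlam : 0 ≤ lam) (ht : 0 ≤ t) (x : ℝ) :
    |exp (-lam * t) * x| ≤ |x| := by
  rw [abs_mul, abs_of_pos (exp_pos _)]
  exact mul_le_of_le_one_left (abs_nonneg x) (exp_le_one_iff.2 (by nlinarith))

lemma intervalIntegrable_exp_neg_mul_mul {r : ℝ → ℝ} {M : ℝ} (hr : Measurable r)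
    (hM : ∀ t, |r t| ≤ M) (lam a b : ℝ) :
    IntervalIntegrable (fun t => exp (-lam * t) * r t) volume a b :=
  ((intervalIntegrable_const (c := M)).mono_fun' hr.aestronglyMeasurable
    (ae_of_all _ hM)).continuousOn_mul (by fun_prop)

lemma abs_integral_exp_neg_mul_mul_le {r : ℝ → ℝ} {lam a b M : ℝ} (hlam : 0 ≤ lam)
    (ha : 0 ≤ a) (hb : 0 ≤ b) (hM : ∀ t ∈ uIoc a b, |r t| ≤ M) :
    |∫ t in a..b, exp (-lam * t) * r t| ≤ M * |b - a| :=
  intervalIntegral.norm_integral_le_of_norm_le_const (f := fun t => exp (-lam * t) * r t)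
    fun t ht => (abs_exp_neg_mul_mul_le hlam ((le_min ha hb).trans ht.1.le) _).trans (hM t ht)

lemma abs_integral_exp_neg_mul_sub_integral_le {r r' : ℝ → ℝ} {lam Tbar T T' ε M : ℝ} (hlam : 0 ≤ lam)
    (hr : Measurable r) (hr' : Measurable r') (hrM : ∀ t, |r t| ≤ M) (hr'M : ∀ t, |r' t| ≤ M)
    (hε : ∀ t ∈ Icc 0 Tbar, |r t - r' t| ≤ ε) (hT : T ∈ Icc 0 Tbar) (hT' : T' ∈ Icc 0 Tbar) :
    |(∫ t in 0..T, exp (-lam * t) * r t) - ∫ t in 0..T', exp (-lam * t) * r' t| ≤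
      ε * Tbar + M * |T - T'| := by
  have hε0 : 0 ≤ ε := (abs_nonneg _).trans (hε 0 ⟨le_rfl, hT.1.trans hT.2⟩)
  have hcommon : |(∫ t in 0..T', exp (-lam * t) * r t) - ∫ t in 0..T', exp (-lam * t) * r' t|
      ≤ ε * Tbar := by
    rw [← intervalIntegral.integral_sub (intervalIntegrable_exp_neg_mul_mul hr hrM lam 0 T')
      (intervalIntegrable_exp_neg_mul_mul hr' hr'M lam 0 T')]
    simp_rw [← mul_sub]
    calc _ ≤ ε * |T' - 0| := abs_integral_exp_neg_mul_mul_le hlam le_rfl hT'.1 fun t ht => by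
          rw [uIoc_of_le hT'.1] at ht
          exact hε t ⟨ht.1.le, ht.2.trans hT'.2⟩
      _ ≤ ε * Tbar := by rw [sub_zero, abs_of_nonneg hT'.1]; gcongr; exact hT'.2
  have htail : |∫ t in T'..T, exp (-lam * t) * r t| ≤ M * |T - T'| :=
    abs_integral_exp_neg_mul_mul_le hlam hT'.1 hT.1 fun t _ => hrM t
  rw [← intervalIntegral.integral_add_adjacent_intervals
    (intervalIntegrable_exp_neg_mul_mul hr hrM lam 0 T')
    (intervalIntegrable_exp_neg_mul_mul hr hrM lam T' T), add_sub_right_comm]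
  exact (abs_add_le _ _).trans (add_le_add hcommon htail)

lemma abs_exp_neg_mul_mul_sub_le {lam T T' x x' M : ℝ} (hlam : 0 ≤ lam) (hT : 0 ≤ T)
    (hT' : 0 ≤ T') (hx : |x| ≤ M) :
    |exp (-lam * T) * x - exp (-lam * T') * x'| ≤ lam * M * |T - T'| + |x - x'| := by
  have hexp : |exp (-lam * T) - exp (-lam * T')| ≤ lam * |T - T'| := by
    simpa only [neg_mul, ← mul_sub, abs_mul, abs_of_nonneg hlam] using
      abs_exp_neg_sub_exp_neg_le (mul_nonneg hlam hT) (mul_nonneg hlam hT')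
  calc |exp (-lam * T) * x - exp (-lam * T') * x'|
      = |(exp (-lam * T) - exp (-lam * T')) * x + exp (-lam * T') * (x - x')| := by ring_nf
    _ ≤ lam * |T - T'| * M + |x - x'| := by
      refine (abs_add_le _ _).trans (add_le_add ?_ (abs_exp_neg_mul_mul_le hlam hT' _))
      rw [abs_mul]
      exact mul_le_mul hexp hx (abs_nonneg _) (by positivity)
    _ = lam * M * |T - T'| + |x - x'| := by ring

lemma norm_sub_le_of_flow_of_lipschitz {E : Type*} [SeminormedAddCommGroup E] {Z Z' : ℝ → E}
    {L MF CT Tbar T T' δ : ℝ} (hL : 0 ≤ L) (hMF : 0 ≤ MF)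
    (hflow : ∀ t, 0 ≤ t → ‖Z t - Z' t‖ ≤ exp (L * t) * δ)
    (hZ' : ∀ s t, 0 ≤ s → 0 ≤ t → ‖Z' t - Z' s‖ ≤ MF * |t - s|)
    (hT : T ∈ Icc 0 Tbar) (hT' : 0 ≤ T') (hTT' : |T - T'| ≤ CT * δ) :
    ‖Z T - Z' T'‖ ≤ (exp (L * Tbar) + MF * CT) * δ := by
  have hδ : 0 ≤ δ := by simpa using (norm_nonneg _).trans (hflow 0 le_rfl)
  calc ‖Z T - Z' T'‖ ≤ ‖Z T - Z' T‖ + ‖Z' T - Z' T'‖ := norm_sub_le_norm_sub_add_norm_sub _ _ _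
    _ ≤ exp (L * Tbar) * δ + MF * (CT * δ) := by
      gcongr
      · exact (hflow T hT.1).trans (by gcongr; exact hT.2)
      · exact (hZ' T' T hT' hT.1).trans (by gcongr)
    _ = (exp (L * Tbar) + MF * CT) * δ := by ring

lemma abs_sub_le_of_holder {E : Type*} [SeminormedAddCommGroup E] {f : E → ℝ} {C γ K δ : ℝ}
    {x y : E} (hC : 0 ≤ C) (hγ : 0 ≤ γ) (hK : 0 ≤ K) (hδ : 0 ≤ δ)
    (hf : ∀ w w', |f w - f w'| ≤ C * ‖w - w'‖ ^ γ) (hxy : ‖x - y‖ ≤ K * δ) :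
    |f x - f y| ≤ C * K ^ γ * δ ^ γ := by
  calc |f x - f y| ≤ C * ‖x - y‖ ^ γ := hf x y
    _ ≤ C * (K * δ) ^ γ := by gcongr
    _ = C * K ^ γ * δ ^ γ := by rw [mul_rpow hK hδ, mul_assoc]

theorem auxiliary_cost_uniform_continuity_general
    (n : ℕ) (lam L MF Ml MV Tbar CT CV γ : ℝ)
    (hlam : 0 < lam) (hL : 0 ≤ L) (hMF : 0 < MF) (hMl : 0 < Ml) (hMV : 0 < MV)
    (hTbar : 0 < Tbar) (hCT : 0 < CT) (hCV : 0 < CV) (hγ0 : 0 < γ) :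
    ∃ C : ℝ, 0 < C ∧
      ∀ (U V : Type) [MeasurableSpace U] [MeasurableSpace V]
        (u : ℝ → U) (v : ℝ → V), Measurable u → Measurable v →
        ∀ l : Euc n → U → V → ℝ,
          (∀ w a b, |l w a b| ≤ Ml) →
          (∀ w w' a b, |l w a b - l w' a b| ≤ L * ‖w - w'‖) →
        ∀ Vh : Euc n → ℝ,
          (∀ w, |Vh w| ≤ MV) →
          (∀ w w', |Vh w - Vh w'| ≤ CV * ‖w - w'‖ ^ γ) →
        ∀ (z z' : Euc n) (Z Z' : ℝ → Euc n), Z 0 = z → Z' 0 = z' →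
          Measurable (fun t => l (Z t) (u t) (v t)) →
          Measurable (fun t => l (Z' t) (u t) (v t)) →
          (∀ t : ℝ, 0 ≤ t → ‖Z t - Z' t‖ ≤ Real.exp (L * t) * ‖z - z'‖) →
          (∀ s t : ℝ, 0 ≤ s → 0 ≤ t → ‖Z t - Z s‖ ≤ MF * |t - s|) →
          (∀ s t : ℝ, 0 ≤ s → 0 ≤ t → ‖Z' t - Z' s‖ ≤ MF * |t - s|) →
        ∀ T T' : ℝ, T ∈ Icc (0 : ℝ) Tbar → T' ∈ Icc (0 : ℝ) Tbar →
          |T - T'| ≤ CT * ‖z - z'‖ →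
          |((∫ t in (0 : ℝ)..T, Real.exp (-lam * t) * l (Z t) (u t) (v t)) +
                Real.exp (-lam * T) * Vh (Z T)) -
              ((∫ t in (0 : ℝ)..T', Real.exp (-lam * t) * l (Z' t) (u t) (v t)) +
                Real.exp (-lam * T') * Vh (Z' T'))| ≤
            C * (‖z - z'‖ + ‖z - z'‖ ^ γ) := by
  set K := exp (L * Tbar) + MF * CT
  set A := L * exp (L * Tbar) * Tbar + Ml * CT + lam * MV * CT
  set B := CV * K ^ γ
  refine ⟨A + B + 1, by positivity, ?_⟩
  intro U V _ _ u v _ _ l hlM hlL Vh hVM hVH z z' Z Z' _ _ hlZ hlZ' hflow _ hZ' T T' hT hT' hTT'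
  set δ := ‖z - z'‖
  have hrunning : ∀ t ∈ Icc 0 Tbar,
      |l (Z t) (u t) (v t) - l (Z' t) (u t) (v t)| ≤ L * exp (L * Tbar) * δ := fun t ht =>
    calc _ ≤ L * (exp (L * t) * δ) := (hlL _ _ _ _).trans (by gcongr; exact hflow t ht.1)
      _ ≤ L * exp (L * Tbar) * δ := by rw [← mul_assoc]; gcongr; exact ht.2
  have hV : |Vh (Z T) - Vh (Z' T')| ≤ B * δ ^ γ := abs_sub_le_of_holder hCV.le hγ0.le
    (by positivity) (norm_nonneg _) hVH (norm_sub_le_of_flow_of_lipschitz hL hMF.le hflow hZ' hT hT'.1 hTT')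
  have hδγ : 0 ≤ δ ^ γ := rpow_nonneg (norm_nonneg _) γ
  calc _ ≤ _ := by rw [add_sub_add_comm]; exact abs_add_le _ _
    _ ≤ (L * exp (L * Tbar) * δ * Tbar + Ml * |T - T'|) + (lam * MV * |T - T'| + B * δ ^ γ) :=
      add_le_add (abs_integral_exp_neg_mul_sub_integral_le hlam.le hlZ hlZ' (fun _ => hlM _ _ _)
        (fun _ => hlM _ _ _) hrunning hT hT')
        ((abs_exp_neg_mul_mul_sub_le hlam.le hT.1 hT'.1 (hVM _)).trans (by gcongr))
    _ ≤ A * δ + B * δ ^ γ := by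
      have : |T - T'| * (Ml + lam * MV) ≤ CT * δ * (Ml + lam * MV) := by gcongr
      linarith
    _ ≤ (A + B + 1) * (δ + δ ^ γ) := by
      have : 0 ≤ A := by positivity
      have : 0 ≤ B := by positivity
      nlinarith [norm_nonneg (z - z')]

/-- Uniform (Hölder-type) continuity in the initial state of the auxiliary cost
consisting of a running cost up to a stopping time and a terminal value. -/
theorem auxiliary_cost_uniform_continuity
    (n : ℕ) (lam L MF Ml MV Tbar CT CV γ : ℝ)
    (hlam : 0 < lam) (hL : 0 ≤ L) (hMF : 0 < MF) (hMl : 0 < Ml) (hMV : 0 < MV)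
    (hTbar : 0 < Tbar) (hCT : 0 < CT) (hCV : 0 < CV) (hγ0 : 0 < γ) (hγ1 : γ ≤ 1) :
    ∃ C : ℝ, 0 < C ∧
      ∀ (U V : Type) [MeasurableSpace U] [MeasurableSpace V]
        (u : ℝ → U) (v : ℝ → V), Measurable u → Measurable v →
        ∀ l : Euc n → U → V → ℝ,
          (∀ w a b, |l w a b| ≤ Ml) →
          (∀ w w' a b, |l w a b - l w' a b| ≤ L * ‖w - w'‖) →
        ∀ Vh : Euc n → ℝ,
          (∀ w, |Vh w| ≤ MV) →
          (∀ w w', |Vh w - Vh w'| ≤ CV * ‖w - w'‖ ^ γ) →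
        ∀ (z z' : Euc n) (Z Z' : ℝ → Euc n), Z 0 = z → Z' 0 = z' →
          Measurable (fun t => l (Z t) (u t) (v t)) →
          Measurable (fun t => l (Z' t) (u t) (v t)) →
          (∀ t : ℝ, 0 ≤ t → ‖Z t - Z' t‖ ≤ Real.exp (L * t) * ‖z - z'‖) →
          (∀ s t : ℝ, 0 ≤ s → 0 ≤ t → ‖Z t - Z s‖ ≤ MF * |t - s|) →
          (∀ s t : ℝ, 0 ≤ s → 0 ≤ t → ‖Z' t - Z' s‖ ≤ MF * |t - s|) →
        ∀ T T' : ℝ, T ∈ Icc (0 : ℝ) Tbar → T' ∈ Icc (0 : ℝ) Tbar →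
          |T - T'| ≤ CT * ‖z - z'‖ →
          |((∫ t in (0 : ℝ)..T, Real.exp (-lam * t) * l (Z t) (u t) (v t)) +
                Real.exp (-lam * T) * Vh (Z T)) -
              ((∫ t in (0 : ℝ)..T', Real.exp (-lam * t) * l (Z' t) (u t) (v t)) +
                Real.exp (-lam * T') * Vh (Z' T'))| ≤
            C * (‖z - z'‖ + ‖z - z'‖ ^ γ) :=
  auxiliary_cost_uniform_continuity_general n lam L MF Ml MV Tbar CT CV γ hlam hL hMF hMl hMV hTbar
    hCT hCV hγ0
end
end

section
/- Let n ∈ ℕ, let 𝒜 and ℬ be nonempty sets, let M > 0, C > 0 and γ ∈ (0,1], and let J̄ : ℝ^{n+1} × 𝒜 × ℬ → ℝ be such that |J̄(z,α,β)| ≤ M for all (z,α,β), z ↦ J̄(z,α,β) is Borel measurable for every (α,β) ∈ 𝒜 × ℬ, and |J̄(z,α,β) − J̄(z',α,β)| ≤ C(‖z − z'‖ + ‖z − z'‖^γ) for all z, z' ∈ ℝ^{n+1} and all (α,β). Let μ₁, μ₂ be Borel probability measures on ℝ^{n+1} and let π be a Borel probability measure on ℝ^{n+1} × ℝ^{n+1}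 whose first marginal is μ₁ and whose second marginal is μ₂, such that W := (∫ ‖z − z'‖² dπ(z,z'))^{1/2} is finite. Then |inf_{α∈𝒜} sup_{β∈ℬ} ∫ J̄(z,α,β) dμ₁(z) − inf_{α∈𝒜} sup_{β∈ℬ} ∫ J̄(z,α,β) dμ₂(z)| ≤ C(W + W^γ). -/
open MeasureTheory Set

noncomputable section

/-- Uniform continuity of the value with respect to the Wasserstein distance:
if `π` is a coupling of `μ₁` and `μ₂`, the inf–sup values of the expected cost
differ by at most `C (W + W^γ)` where `W = (∫ ‖z - z'‖² dπ)^{1/2}`. -/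
theorem value_wasserstein_continuity
    (n : ℕ) (𝒜 ℬ : Type) [Nonempty 𝒜] [Nonempty ℬ] (M C γ : ℝ)
    (hM : 0 < M) (hC : 0 < C) (hγ0 : 0 < γ) (hγ1 : γ ≤ 1)
    (J : Euc n → 𝒜 → ℬ → ℝ)
    (hJb : ∀ z a b, |J z a b| ≤ M)
    (hJm : ∀ a b, Measurable fun z => J z a b)
    (hJL : ∀ z z' a b, |J z a b - J z' a b| ≤ C * (‖z - z'‖ + ‖z - z'‖ ^ γ))
    (μ₁ μ₂ : Measure (Euc n)) [IsProbabilityMeasure μ₁] [IsProbabilityMeasure μ₂]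
    (π : Measure (Euc n × Euc n)) [IsProbabilityMeasure π]
    (hπ1 : π.map Prod.fst = μ₁) (hπ2 : π.map Prod.snd = μ₂)
    (hint : Integrable (fun q : Euc n × Euc n => ‖q.1 - q.2‖ ^ 2) π) :
    |(⨅ a : 𝒜, ⨆ b : ℬ, ∫ z, J z a b ∂μ₁) - ⨅ a : 𝒜, ⨆ b : ℬ, ∫ z, J z a b ∂μ₂| ≤
      C * (Real.sqrt (∫ q, ‖q.1 - q.2‖ ^ 2 ∂π) +
        Real.sqrt (∫ q, ‖q.1 - q.2‖ ^ 2 ∂π) ^ γ) := by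
  set W : ℝ := Real.sqrt (∫ q, ‖q.1 - q.2‖ ^ 2 ∂π) with hWdef
  set ε : ℝ := C * (W + W ^ γ) with hεdef
  have hWnn : 0 ≤ W := Real.sqrt_nonneg _
  have hεnn : 0 ≤ ε := by
    have : 0 ≤ W ^ γ := Real.rpow_nonneg hWnn _
    positivity
  have hDnn : ∀ q : Euc n × Euc n, (0:ℝ) ≤ ‖q.1 - q.2‖ := fun q => norm_nonneg _
  have hDm : Measurable fun q : Euc n × Euc n => ‖q.1 - q.2‖ :=
    (continuous_fst.sub continuous_snd).norm.measurable
  -- integrability of `‖q.1 - q.2‖`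
  have hD1 : Integrable (fun q : Euc n × Euc n => ‖q.1 - q.2‖) π := by
    refine ((integrable_const (1:ℝ)).add hint).mono' hDm.aestronglyMeasurable ?_
    filter_upwards with q
    simp only [Pi.add_apply]
    rw [Real.norm_of_nonneg (hDnn q)]
    nlinarith [hDnn q, sq_nonneg (‖q.1 - q.2‖ - 1)]
  -- integrability of `‖q.1 - q.2‖ ^ γ`
  have hDγ : Integrable (fun q : Euc n × Euc n => ‖q.1 - q.2‖ ^ γ) π := by
    refine ((integrable_const (1:ℝ)).add hD1).mono'
      (((Real.continuous_rpow_const hγ0.le).measurable.comp hDm).aestronglyMeasurable) ?_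
    filter_upwards with q
    simp only [Pi.add_apply]
    rw [Real.norm_of_nonneg (Real.rpow_nonneg (hDnn q) _)]
    rcases le_total ‖q.1 - q.2‖ 1 with h | h
    · have := Real.rpow_le_one (hDnn q) h hγ0.le
      have := hDnn q
      linarith
    · have h2 : ‖q.1 - q.2‖ ^ γ ≤ ‖q.1 - q.2‖ ^ (1:ℝ) :=
        Real.rpow_le_rpow_of_exponent_le h hγ1
      rw [Real.rpow_one] at h2
      linarith
  have hIntDnn : 0 ≤ ∫ q, ‖q.1 - q.2‖ ∂π := integral_nonneg hDnn
  -- Step A : first moment ≤ W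
  have hA : (∫ q, ‖q.1 - q.2‖ ∂π) ≤ W := by
    have hj : (∫ q, ‖q.1 - q.2‖ ∂π) ^ 2 ≤ ∫ q, ‖q.1 - q.2‖ ^ 2 ∂π := by
      have := (Even.convexOn_pow (even_two) (𝕜 := ℝ)).map_integral_le
        (μ := π) (f := fun q : Euc n × Euc n => ‖q.1 - q.2‖)
        (continuous_pow 2).continuousOn isClosed_univ
        (Filter.Eventually.of_forall fun q => mem_univ _) hD1 (by exact hint)
      exact this
    calc (∫ q, ‖q.1 - q.2‖ ∂π) = Real.sqrt ((∫ q, ‖q.1 - q.2‖ ∂π) ^ 2) :=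
          (Real.sqrt_sq hIntDnn).symm
      _ ≤ W := Real.sqrt_le_sqrt hj
  -- Step B : γ-moment ≤ W ^ γ
  have hB : (∫ q, ‖q.1 - q.2‖ ^ γ ∂π) ≤ W ^ γ := by
    have hj : (∫ q, ‖q.1 - q.2‖ ^ γ ∂π) ≤ (∫ q, ‖q.1 - q.2‖ ∂π) ^ γ :=
      (Real.concaveOn_rpow hγ0.le hγ1).le_map_integral
        ((Real.continuous_rpow_const hγ0.le).continuousOn) isClosed_Ici
        (Filter.Eventually.of_forall fun q => hDnn q) hD1 (by exact hDγ)
    exact hj.trans (Real.rpow_le_rpow hIntDnn hA hγ0.le)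
  -- integrability of the payoff
  have hJint : ∀ (a : 𝒜) (b : ℬ) (f : Euc n × Euc n → Euc n), Measurable f →
      Integrable (fun q => J (f q) a b) π := by
    intro a b f hf
    refine (integrable_const M).mono' ((hJm a b).comp hf).aestronglyMeasurable ?_
    filter_upwards with q
    simpa [Real.norm_eq_abs] using hJb (f q) a b
  -- Step C : key estimate for fixed (a, b)
  have key : ∀ (a : 𝒜) (b : ℬ), |(∫ z, J z a b ∂μ₁) - ∫ z, J z a b ∂μ₂| ≤ ε := by
    intro a b
    have h1 : (∫ z, J z a b ∂μ₁) = ∫ q, J q.1 a b ∂π := by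
      rw [← hπ1, integral_map measurable_fst.aemeasurable (hJm a b).aestronglyMeasurable]
    have h2 : (∫ z, J z a b ∂μ₂) = ∫ q, J q.2 a b ∂π := by
      rw [← hπ2, integral_map measurable_snd.aemeasurable (hJm a b).aestronglyMeasurable]
    rw [h1, h2, ← integral_sub (hJint a b _ measurable_fst) (hJint a b _ measurable_snd)]
    calc |∫ q, (J q.1 a b - J q.2 a b) ∂π|
        ≤ ∫ q, |J q.1 a b - J q.2 a b| ∂π := by
          simpa [Real.norm_eq_abs] using
            norm_integral_le_integral_norm (fun q : Euc n × Euc n => J q.1 a b - J q.2 a b) (μ := π)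
      _ ≤ ∫ q, C * (‖q.1 - q.2‖ + ‖q.1 - q.2‖ ^ γ) ∂π := by
          refine integral_mono_of_nonneg (Filter.Eventually.of_forall fun q => abs_nonneg _)
            ((hD1.add hDγ).const_mul C) (Filter.Eventually.of_forall fun q => ?_)
          exact hJL q.1 q.2 a b
      _ = C * ((∫ q, ‖q.1 - q.2‖ ∂π) + ∫ q, ‖q.1 - q.2‖ ^ γ ∂π) := by
          rw [← integral_add hD1 hDγ, ← integral_const_mul]
      _ ≤ ε := mul_le_mul_of_nonneg_left (add_le_add hA hB) hC.le
  -- boundedness of integrals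
  have hIb : ∀ (μ : Measure (Euc n)) [IsProbabilityMeasure μ] (a : 𝒜) (b : ℬ),
      |∫ z, J z a b ∂μ| ≤ M := by
    intro μ _ a b
    calc |∫ z, J z a b ∂μ| ≤ ∫ z, |J z a b| ∂μ := by
          simpa [Real.norm_eq_abs] using
            norm_integral_le_integral_norm (fun z => J z a b) (μ := μ)
      _ ≤ ∫ _z, M ∂μ := by
          refine integral_mono_of_nonneg (Filter.Eventually.of_forall fun z => abs_nonneg _)
            (integrable_const M) (Filter.Eventually.of_forall fun z => hJb z a b)
      _ = M := by simp
  have bdd : ∀ (μ : Measure (Euc n)) [IsProbabilityMeasure μ] (a : 𝒜),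
      BddAbove (Set.range fun b => ∫ z, J z a b ∂μ) := by
    intro μ _ a
    refine ⟨M, ?_⟩
    rintro x ⟨b, rfl⟩
    exact (abs_le.mp (hIb μ a b)).2
  -- Step D1 : compare the sups
  have hsup : ∀ a : 𝒜,
      |(⨆ b, ∫ z, J z a b ∂μ₁) - ⨆ b, ∫ z, J z a b ∂μ₂| ≤ ε := by
    intro a
    rw [abs_sub_le_iff]
    constructor
    · rw [sub_le_iff_le_add]
      refine ciSup_le fun b => ?_
      have h := (abs_le.mp (key a b)).2
      have h2 := le_ciSup (bdd μ₂ a) b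
      linarith
    · rw [sub_le_iff_le_add]
      refine ciSup_le fun b => ?_
      have h := (abs_le.mp (key a b)).1
      have h2 := le_ciSup (bdd μ₁ a) b
      linarith
  -- lower bounds on sups give BddBelow for the infs
  have bddb : ∀ (μ : Measure (Euc n)) [IsProbabilityMeasure μ],
      BddBelow (Set.range fun a => ⨆ b, ∫ z, J z a b ∂μ) := by
    intro μ _
    refine ⟨-M, ?_⟩
    rintro x ⟨a, rfl⟩
    obtain ⟨b⟩ := ‹Nonempty ℬ›
    calc -M ≤ ∫ z, J z a b ∂μ := (abs_le.mp (hIb μ a b)).1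
      _ ≤ ⨆ b, ∫ z, J z a b ∂μ := le_ciSup (bdd μ a) b
  -- Step D2 : compare the infs
  rw [abs_sub_le_iff]
  constructor
  · have hle : (⨅ a, ⨆ b, ∫ z, J z a b ∂μ₁) - ε ≤ ⨅ a, ⨆ b, ∫ z, J z a b ∂μ₂ := by
      refine le_ciInf fun a => ?_
      have h := (abs_le.mp (hsup a)).2
      have h2 : (⨅ a, ⨆ b, ∫ z, J z a b ∂μ₁) ≤ ⨆ b, ∫ z, J z a b ∂μ₁ :=
        ciInf_le (bddb μ₁) a
      linarith
    linarith
  · have hle : (⨅ a, ⨆ b, ∫ z, J z a b ∂μ₂) - ε ≤ ⨅ a, ⨆ b, ∫ z, J z a b ∂μ₁ := by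
      refine le_ciInf fun a => ?_
      have h := (abs_le.mp (hsup a)).1
      have h2 : (⨅ a, ⨆ b, ∫ z, J z a b ∂μ₂) ≤ ⨆ b, ∫ z, J z a b ∂μ₂ :=
        ciInf_le (bddb μ₂) a
      linarith
    linarith
end
end

section
/- Let n ∈ ℕ, let Z be a nonempty compact subset of ℝ^{n+1}, μ₀ a Borel probability measure on Z, W₁, W₂ : C(Z,Z) → ℝ, ε > 0, and k > 0 with k ≥ 2·sup_{z∈Z}‖z‖. Assume |W₁(Φ) − W₁(Ψ)| ≤ k‖Φ − Ψ‖_{L²_{μ₀}} for all Φ, Ψ ∈ C(Z,Z). Define W_ε(Φ₁,Φ₂) := W₂(Φ₂) − W₁(Φ₁) + (1/ε)‖Φ₁ − Φ₂‖²_{L²_{μ₀}}, and suppose (Φ̄₁, Φ̄₂) ∈ C(Z,Z) × C(Z,Z) satisfies W_ε(Φ̄₁,Φ̄₂) ≤ W_ε(Φ₁,Φ₂) + ε(‖Φ₁ − Φ̄₁‖_∞ + ‖Φ₂ − Φ̄₂‖_∞) for all (Φ₁,Φ₂) ∈ C(Z,Z) × C(Z,Z). Then ‖Φ̄₁ − Φ̄₂‖_{L²_{μ₀}}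 ≤ (ε/2)(k + √(k² + 4k)). -/
open MeasureTheory Set

noncomputable section

/-- The uniform distance `‖Φ - Ψ‖_∞` between two elements of `C(Z,Z)`. -/
def supDist {n : ℕ} {Zs : Set (Euc n)} (Φ Ψ : C(↥Zs, ↥Zs)) : ℝ :=
  ⨆ z : ↥Zs, ‖(Φ z : Euc n) - (Ψ z : Euc n)‖

/-- The `L²_{μ₀}` distance between two elements of `C(Z,Z)`. -/
def L2dist {n : ℕ} {Zs : Set (Euc n)} (μ₀ : Measure ↥Zs) (Φ Ψ : C(↥Zs, ↥Zs)) : ℝ :=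
  Real.sqrt (∫ z, ‖(Φ z : Euc n) - (Ψ z : Euc n)‖ ^ 2 ∂μ₀)

/-- Quantitative closeness of the two components of an Ekeland point of the doubled
functional `W_ε`: `‖Φ̄₁ - Φ̄₂‖_{L²_{μ₀}} ≤ (ε/2)(k + √(k² + 4k))`. -/
theorem ekeland_point_closeness
    (n : ℕ) (Zs : Set (Euc n)) (hZc : IsCompact Zs) (hZn : Zs.Nonempty)
    (μ₀ : Measure ↥Zs) [IsProbabilityMeasure μ₀]
    (W₁ W₂ : C(↥Zs, ↥Zs) → ℝ) (ε k : ℝ) (hε : 0 < ε) (hk : 0 < k)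
    (hk2 : 2 * (⨆ z : ↥Zs, ‖(z : Euc n)‖) ≤ k)
    (hW₁L : ∀ Φ Ψ : C(↥Zs, ↥Zs), |W₁ Φ - W₁ Ψ| ≤ k * L2dist μ₀ Φ Ψ)
    (Φb₁ Φb₂ : C(↥Zs, ↥Zs))
    (hek : ∀ Φ₁ Φ₂ : C(↥Zs, ↥Zs),
      W₂ Φb₂ - W₁ Φb₁ + (1 / ε) * ∫ z, ‖(Φb₁ z : Euc n) - (Φb₂ z : Euc n)‖ ^ 2 ∂μ₀ ≤
        W₂ Φ₂ - W₁ Φ₁ + (1 / ε) * (∫ z, ‖(Φ₁ z : Euc n) - (Φ₂ z : Euc n)‖ ^ 2 ∂μ₀) +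
          ε * (supDist Φ₁ Φb₁ + supDist Φ₂ Φb₂)) :
    L2dist μ₀ Φb₁ Φb₂ ≤ (ε / 2) * (k + Real.sqrt (k ^ 2 + 4 * k)) := by

  haveI : Nonempty ↥Zs := hZn.to_subtype
  set I : ℝ := ∫ z, ‖(Φb₁ z : Euc n) - (Φb₂ z : Euc n)‖ ^ 2 ∂μ₀ with hIdef
  have hI : 0 ≤ I := integral_nonneg fun z => sq_nonneg _
  set D : ℝ := L2dist μ₀ Φb₁ Φb₂ with hDdef
  have hD0 : 0 ≤ D := Real.sqrt_nonneg _
  have hD2 : D ^ 2 = I := Real.sq_sqrt hI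
  -- bound on supDist Φb₂ Φb₁
  have hbdd : BddAbove (Set.range fun z : ↥Zs => ‖(z : Euc n)‖) := by
    have := (hZc.image continuous_norm).bddAbove
    rwa [Set.image_eq_range] at this
  have hsupk : supDist Φb₂ Φb₁ ≤ k := by
    apply ciSup_le
    intro z
    calc ‖(Φb₂ z : Euc n) - (Φb₁ z : Euc n)‖
        ≤ ‖(Φb₂ z : Euc n)‖ + ‖(Φb₁ z : Euc n)‖ := norm_sub_le _ _
      _ ≤ (⨆ z : ↥Zs, ‖(z : Euc n)‖) + (⨆ z : ↥Zs, ‖(z : Euc n)‖) := by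
          gcongr
          · exact le_ciSup hbdd (Φb₂ z)
          · exact le_ciSup hbdd (Φb₁ z)
      _ ≤ k := by linarith
  have hsup0 : supDist Φb₂ Φb₂ = 0 := by
    simp [supDist, ciSup_const]
  have hW : W₁ Φb₁ - W₁ Φb₂ ≤ k * D := le_trans (le_abs_self _) (hW₁L _ _)
  have key := hek Φb₂ Φb₂
  simp only [sub_self, norm_zero, hsup0, add_zero] at key
  have hzero : (∫ z : ↥Zs, (0:ℝ) ^ 2 ∂μ₀) = 0 := by simp
  rw [hzero] at key
  -- key : W₂ Φb₂ - W₁ Φb₁ + (1/ε) * I ≤ W₂ Φb₂ - W₁ Φb₂ + (1/ε) * 0 + ε * supDist Φb₂ Φb₁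
  have hIle : I ≤ ε * k * D + ε ^ 2 * k := by
    have h1 : (1 / ε) * I ≤ (W₁ Φb₁ - W₁ Φb₂) + ε * supDist Φb₂ Φb₁ := by linarith
    have h2 : (1 / ε) * I ≤ k * D + ε * k := by
      have := mul_le_mul_of_nonneg_left hsupk hε.le
      linarith
    have h3 := mul_le_mul_of_nonneg_left h2 hε.le
    rw [← mul_assoc, mul_one_div, div_self hε.ne', one_mul] at h3
    nlinarith
  -- quadratic inequality
  set s : ℝ := Real.sqrt (k ^ 2 + 4 * k) with hsdef
  have hs0 : 0 ≤ s := Real.sqrt_nonneg _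
  have hs2 : s ^ 2 = k ^ 2 + 4 * k := Real.sq_sqrt (by nlinarith)
  have hsk : k < s := by nlinarith
  by_contra hcon
  push_neg at hcon
  have f1 : 0 < 2 * D - ε * (k + s) := by nlinarith
  have f2 : 0 < 2 * D - ε * (k - s) := by nlinarith [mul_pos hε (sub_pos.2 hsk)]
  nlinarith [mul_pos f1 f2]
end
end
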